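/- arXiv:1309.2775 — 6 statements merged into one kernel-verified Lean document; each statement's English description precedes it below -/
import Mathlib

section
/- Let (X,d) be a metric space, n a natural number, and let D(r) = A·r + B with A ≥ 1 and B ≥ 0 be an affine n-dimensional control function for (X,d). Let c : [0,∞) → [0,∞) be concave, unbounded, and satisfy c(r) = 0 if and only if r = 0, and let d' = c ∘ d. Then the affine function D'(r) = A·r + c(B) is an n-dimensional control function for the metric space (X, d'). -/
/-!
A concave `c` with `c 0 = 0` that is bounded below on `[0, ∞)` is monotone, subadditive and
satisfies `c (A * s) ≤ A * c s` for `A ≥ 1`; being unbounded and continuous on `(0, ∞)` it takes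
every value `r` above some `c t`, `t > 0`. Given `r > 0`, pick such an `s > 0` with `c s = r`:
the `s`-disjoint families for `d` of diameter at most `A * s + B` are then `r`-disjoint for `c ∘ d`,
of `c ∘ d`-diameter at most `c (A * s + B) ≤ A * c s + c B = A * r + c B`. If no such `s` exists,
every two distinct points are at `c ∘ d`-distance at least `r`, and singletons suffice.
-/

/-- `D` is an `n`-dimensional control function for the space `X` with distance
function `d`: for every `r > 0` there are `n + 1` families of subsets of `X`
whose union covers `X`, each family being `r`-disjoint, with all members of all
families of diameter at most `D r`. -/
def IsControlFunction {X : Type*} (d : X → X → ℝ) (n : ℕ) (D : ℝ → ℝ) : Prop :=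
  ∀ r : ℝ, 0 < r → ∃ 𝒰 : Fin (n + 1) → Set (Set X),
    (∀ x : X, ∃ i, ∃ U ∈ 𝒰 i, x ∈ U) ∧
    (∀ i, ∀ U ∈ 𝒰 i, ∀ V ∈ 𝒰 i, U ≠ V → ∀ u ∈ U, ∀ v ∈ V, r ≤ d u v) ∧
    (∀ i, ∀ U ∈ 𝒰 i, ∀ u ∈ U, ∀ v ∈ U, d u v ≤ D r)

open Set

section Concave

variable {c : ℝ → ℝ}

theorem ConcaveOn.monotoneOn_of_bddBelow {a : ℝ} (hc : ConcaveOn ℝ (Ici a) c)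
    (hbdd : BddBelow (c '' Ici a)) : MonotoneOn c (Ici a) := by
  intro x hx y hy hxy
  by_contra! hlt
  obtain ⟨L, hL⟩ := hbdd
  have hxy' : x < y := hxy.lt_of_ne (ne_of_apply_ne c hlt.ne')
  set m := (c x - c y) / (y - x) with hm
  have hm_pos : 0 < m := div_pos (by linarith) (by linarith)
  -- Past `y` the graph stays below the secant through `x` and `y`, which has slope `-m < 0`.
  set t := y + (c y - L) / m + 1 with ht
  have hLy : L ≤ c y := hL ⟨y, hy, rfl⟩
  have hyt : y < t := by
    have : 0 ≤ (c y - L) / m := div_nonneg (by linarith) hm_pos.le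
    linarith
  have htmem : t ∈ Ici a := le_trans hy (le_of_lt hyt)
  have hslope := hc.slope_anti_adjacent hx htmem hxy' hyt
  rw [div_le_iff₀ (by linarith), ← neg_sub (c x), neg_div, ← hm] at hslope
  have hLt : L ≤ c t := hL ⟨t, htmem, rfl⟩
  have : m * (t - y) = c y - L + m := by
    rw [ht]; field_simp; ring
  nlinarith

theorem ConcaveOn.mul_le_apply_mul (hc : ConcaveOn ℝ (Ici 0) c) (hc0 : 0 ≤ c 0)
    {t x : ℝ} (ht₀ : 0 ≤ t) (ht₁ : t ≤ 1) (hx : 0 ≤ x) :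
    t * c x ≤ c (t * x) := by
  have key := hc.2 (mem_Ici.2 hx) (mem_Ici.2 le_rfl) ht₀ (sub_nonneg.2 ht₁) (by ring)
  simp only [smul_eq_mul, mul_zero, add_zero] at key
  nlinarith

theorem ConcaveOn.apply_add_le (hc : ConcaveOn ℝ (Ici 0) c) (hc0 : 0 ≤ c 0)
    {x y : ℝ} (hx : 0 ≤ x) (hy : 0 ≤ y) :
    c (x + y) ≤ c x + c y := by
  rcases hx.eq_or_lt with rfl | hx'
  · simpa using hc0
  have hxy : 0 < x + y := by linarith
  have h₁ := hc.mul_le_apply_mul hc0 (div_nonneg hx hxy.le)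
    (div_le_one_of_le₀ (by linarith) hxy.le) hxy.le
  have h₂ := hc.mul_le_apply_mul hc0 (div_nonneg hy hxy.le)
    (div_le_one_of_le₀ (by linarith) hxy.le) hxy.le
  rw [div_mul_cancel₀ _ hxy.ne'] at h₁ h₂
  calc c (x + y) = x / (x + y) * c (x + y) + y / (x + y) * c (x + y) := by
        field_simp
    _ ≤ c x + c y := add_le_add h₁ h₂

theorem ConcaveOn.apply_mul_le_mul (hc : ConcaveOn ℝ (Ici 0) c) (hc0 : 0 ≤ c 0)
    {A s : ℝ} (hA : 1 ≤ A) (hs : 0 ≤ s) :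
    c (A * s) ≤ A * c s := by
  have hA₀ : 0 < A := by linarith
  have key := hc.mul_le_apply_mul hc0 (inv_nonneg.2 hA₀.le) (inv_le_one_of_one_le₀ hA)
    (mul_nonneg hA₀.le hs)
  rw [inv_mul_cancel_left₀ hA₀.ne'] at key
  rwa [inv_mul_le_iff₀ hA₀] at key

theorem ConcaveOn.exists_pos_apply_eq (hc : ConcaveOn ℝ (Ici 0) c)
    (hmono : MonotoneOn c (Ici 0)) (hunbounded : ∀ M : ℝ, ∃ r, 0 ≤ r ∧ M ≤ c r)
    {t r : ℝ} (ht : 0 < t) (hle : c t ≤ r) : ∃ s, 0 < s ∧ c s = r := by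
  obtain ⟨T, hT, hrT⟩ := hunbounded r
  have hcont : ContinuousOn c (Icc t (max t T)) := by
    refine (hc.continuousOn_interior).mono ?_
    rw [interior_Ici]
    exact fun x hx => ht.trans_le hx.1
  have hrT' : r ≤ c (max t T) :=
    hrT.trans (hmono hT (hT.trans (le_max_right t T)) (le_max_right t T))
  obtain ⟨s, hs, hcs⟩ := intermediate_value_Icc (le_max_left t T) hcont ⟨hle, hrT'⟩
  exact ⟨s, ht.trans_le hs.1, hcs⟩

end Concave

section ControlCover

variable {X : Type*} {d : X → X → ℝ} {n : ℕ}

/-- The condition in `IsControlFunction d n D` at a single scale `r`, with `R` in place of `D r`. -/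
def HasControlCover (d : X → X → ℝ) (n : ℕ) (r R : ℝ) : Prop :=
  ∃ 𝒰 : Fin (n + 1) → Set (Set X),
    (∀ x : X, ∃ i, ∃ U ∈ 𝒰 i, x ∈ U) ∧
    (∀ i, ∀ U ∈ 𝒰 i, ∀ V ∈ 𝒰 i, U ≠ V → ∀ u ∈ U, ∀ v ∈ V, r ≤ d u v) ∧
    (∀ i, ∀ U ∈ 𝒰 i, ∀ u ∈ U, ∀ v ∈ U, d u v ≤ R)

theorem HasControlCover.mono_right {r R R' : ℝ} (h : HasControlCover d n r R) (hR : R ≤ R') :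
    HasControlCover d n r R' := by
  obtain ⟨𝒰, hcov, hdisj, hdiam⟩ := h
  exact ⟨𝒰, hcov, hdisj, fun i U hU u hu v hv => (hdiam i U hU u hu v hv).trans hR⟩

theorem HasControlCover.comp {φ : ℝ → ℝ} {s R : ℝ} (h : HasControlCover d n s R)
    (hd : ∀ u v, 0 ≤ d u v) (hs : 0 ≤ s) (hφ : MonotoneOn φ (Ici 0)) :
    HasControlCover (fun u v => φ (d u v)) n (φ s) (φ R) := by
  obtain ⟨𝒰, hcov, hdisj, hdiam⟩ := h
  refine ⟨𝒰, hcov, fun i U hU V hV hUV u hu v hv => ?_, fun i U hU u hu v hv => ?_⟩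
  · exact hφ hs (hd u v) (hdisj i U hU V hV hUV u hu v hv)
  · have huv := hdiam i U hU u hu v hv
    exact hφ (hd u v) ((hd u v).trans huv) huv

theorem hasControlCover_singletons {r R : ℝ} (hsep : ∀ u v, u ≠ v → r ≤ d u v)
    (hdiag : ∀ u, d u u ≤ R) : HasControlCover d n r R := by
  refine ⟨fun _ => range fun x : X => ({x} : Set X), fun x => ⟨0, {x}, ⟨x, rfl⟩, rfl⟩,
    ?_, ?_⟩
  · rintro i _ ⟨a, rfl⟩ _ ⟨b, rfl⟩ hab u (rfl : u = a) v (rfl : v = b)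
    exact hsep u v fun huv => hab (by rw [huv])
  · rintro i _ ⟨a, rfl⟩ u (rfl : u = a) v (rfl : v = u)
    exact hdiag v

end ControlCover

theorem stmt_7 (X : Type*) [MetricSpace X] (n : ℕ) (A B : ℝ)
    (hA : 1 ≤ A) (hB : 0 ≤ B)
    (hD : IsControlFunction (fun x y : X => dist x y) n (fun r => A * r + B))
    (c : ℝ → ℝ)
    (hnonneg : ∀ r, 0 ≤ r → 0 ≤ c r)
    (hconcave : ConcaveOn ℝ (Set.Ici (0 : ℝ)) c)
    (hunbounded : ∀ M : ℝ, ∃ r, 0 ≤ r ∧ M ≤ c r)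
    (hzero : ∀ r, 0 ≤ r → (c r = 0 ↔ r = 0)) :
    IsControlFunction (fun x y : X => c (dist x y)) n (fun r => A * r + c B) := by
  have hc0 : c 0 = 0 := (hzero 0 le_rfl).2 rfl
  have hmono : MonotoneOn c (Ici 0) :=
    hconcave.monotoneOn_of_bddBelow ⟨0, by rintro _ ⟨x, hx, rfl⟩; exact hnonneg x hx⟩
  intro r hr
  by_cases hsep : ∀ t, 0 < t → r ≤ c t
  · refine hasControlCover_singletons (fun u v huv => hsep _ (dist_pos.2 huv)) fun u => ?_
    simp only [dist_self, hc0]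
    nlinarith [hnonneg B hB]
  push Not at hsep
  obtain ⟨t, ht, hct⟩ := hsep
  obtain ⟨s, hs, rfl⟩ := hconcave.exists_pos_apply_eq hmono hunbounded ht hct.le
  refine (HasControlCover.comp (hD s hs) (fun _ _ => dist_nonneg) hs.le hmono).mono_right ?_
  calc c (A * s + B) ≤ c (A * s) + c B :=
        hconcave.apply_add_le hc0.ge (by positivity) hB
    _ ≤ A * c s + c B := by gcongr; exact hconcave.apply_mul_le_mul hc0.ge hA hs.le
end

section
/- Let (X,d) be a metric space and n a natural number such that (X,d) admits a real-valued n-dimensional control function. Then there exists a function c : [0,∞) → [0,∞) that is concave, strictly increasing, continuous, unbounded, with c(0) = 0, such that d' = c ∘ d is a metric on X and the affine function D'(r) = r + 2 is an n-dimensional control function for (X, d'). -/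
/-!
Choose breakpoints `0 = t₀ < t₁ < ⋯` whose gaps `tₖ₊₁ - tₖ` are at least `1` and nondecreasing
and satisfy `D tₖ ≤ tₖ₊₁`, and let `c` be the piecewise linear function with `c tₖ = k`.
Nondecreasing gaps make `c` the lower envelope of its linear pieces, hence concave, hence
subadditive since `c 0 = 0`; so `c ∘ d` is a metric, and gaps `≥ 1` make `c` `1`-Lipschitz.
For `r > 0` and `k = ⌈r⌉`, a cover that is `tₖ`-disjoint with `d`-diameters `≤ D tₖ ≤ tₖ₊₁`
is `r`-disjoint for `c ∘ d` because `c tₖ = k ≥ r`, and its `c ∘ d`-diameters are at most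
`c tₖ₊₁ = k + 1 ≤ r + 2`.
-/

/-- A function `d : X → X → ℝ` is a metric on `X`. -/
def IsMetric {X : Type*} (d : X → X → ℝ) : Prop :=
  (∀ x y, 0 ≤ d x y) ∧ (∀ x y, (d x y = 0 ↔ x = y)) ∧
  (∀ x y, d x y = d y x) ∧ (∀ x y z, d x z ≤ d x y + d y z)

open Set

def gap (t : ℕ → ℝ) (k : ℕ) : ℝ := t (k + 1) - t k

noncomputable def interpLine (t : ℕ → ℝ) (k : ℕ) (x : ℝ) : ℝ := k + (x - t k) / gap t k

noncomputable def segmentIndex (t : ℕ → ℝ) (x : ℝ) : ℕ := sInf {k | x < t (k + 1)}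

noncomputable def interp (t : ℕ → ℝ) (x : ℝ) : ℝ := interpLine t (segmentIndex t x) x

section Interp

variable {t : ℕ → ℝ}

lemma gap_pos (hmono : Monotone (gap t)) (hpos : 0 < gap t 0) (k : ℕ) : 0 < gap t k :=
  hpos.trans_le (hmono k.zero_le)

lemma strictMono_of_monotone_gap (hmono : Monotone (gap t)) (hpos : 0 < gap t 0) :
    StrictMono t :=
  strictMono_nat_of_lt_succ fun k => sub_pos.mp (gap_pos hmono hpos k)

lemma add_mul_gap_zero_le (hmono : Monotone (gap t)) (k : ℕ) : t 0 + k * gap t 0 ≤ t k := by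
  induction k with
  | zero => simp
  | succ k ih =>
    have : gap t 0 ≤ t (k + 1) - t k := hmono k.zero_le
    push_cast
    linarith

lemma exists_lt_succ (hmono : Monotone (gap t)) (hpos : 0 < gap t 0) (x : ℝ) :
    ∃ k, x < t (k + 1) := by
  obtain ⟨k, hk⟩ := exists_nat_gt ((x - t 0) / gap t 0)
  refine ⟨k, ?_⟩
  have h1 := add_mul_gap_zero_le hmono (k + 1)
  have h2 : x - t 0 < k * gap t 0 := (div_lt_iff₀ hpos).mp hk
  push_cast at h1
  nlinarith

lemma interpLine_succ_sub (hmono : Monotone (gap t)) (hpos : 0 < gap t 0) (j : ℕ) (x : ℝ) :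
    interpLine t (j + 1) x - interpLine t j x =
      (t (j + 1) - x) * ((gap t j)⁻¹ - (gap t (j + 1))⁻¹) := by
  have hj := (gap_pos hmono hpos j).ne'
  have hj' := (gap_pos hmono hpos (j + 1)).ne'
  have ht : t (j + 1) = t j + gap t j := by simp [gap]
  simp only [interpLine]
  rw [ht]
  field_simp
  push_cast
  ring

lemma inv_gap_succ_le (hmono : Monotone (gap t)) (hpos : 0 < gap t 0) (j : ℕ) :
    (gap t (j + 1))⁻¹ ≤ (gap t j)⁻¹ :=
  inv_anti₀ (gap_pos hmono hpos j) (hmono j.le_succ)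

lemma interpLine_le_succ (hmono : Monotone (gap t)) (hpos : 0 < gap t 0) {j : ℕ} {x : ℝ}
    (hx : x ≤ t (j + 1)) : interpLine t j x ≤ interpLine t (j + 1) x := by
  rw [← sub_nonneg, interpLine_succ_sub hmono hpos]
  exact mul_nonneg (sub_nonneg.mpr hx) (sub_nonneg.mpr (inv_gap_succ_le hmono hpos j))

lemma interpLine_succ_le (hmono : Monotone (gap t)) (hpos : 0 < gap t 0) {j : ℕ} {x : ℝ}
    (hx : t (j + 1) ≤ x) : interpLine t (j + 1) x ≤ interpLine t j x := by
  rw [← sub_nonpos, interpLine_succ_sub hmono hpos]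
  exact mul_nonpos_of_nonpos_of_nonneg (sub_nonpos.mpr hx)
    (sub_nonneg.mpr (inv_gap_succ_le hmono hpos j))

lemma interpLine_le_of_le (hmono : Monotone (gap t)) (hpos : 0 < gap t 0) {k j : ℕ} {x : ℝ}
    (hkj : k ≤ j) (hx : x ≤ t (k + 1)) : interpLine t k x ≤ interpLine t j x := by
  have ht := (strictMono_of_monotone_gap hmono hpos).monotone
  induction j, hkj using Nat.le_induction with
  | base => rfl
  | succ j hkj ih => exact ih.trans (interpLine_le_succ hmono hpos (hx.trans (ht (by omega))))

lemma interpLine_le_of_ge (hmono : Monotone (gap t)) (hpos : 0 < gap t 0) {k j : ℕ} {x : ℝ}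
    (hjk : j ≤ k) (hx : t k ≤ x) : interpLine t k x ≤ interpLine t j x := by
  have ht := (strictMono_of_monotone_gap hmono hpos).monotone
  induction k, hjk using Nat.le_induction with
  | base => rfl
  | succ k hjk ih => exact (interpLine_succ_le hmono hpos hx).trans (ih ((ht k.le_succ).trans hx))

/-- So on `Ici (t 0)`, `interp t` is the lower envelope of the lines `interpLine t j`, which
makes it concave. -/
lemma interpLine_le_interpLine (hmono : Monotone (gap t)) (hpos : 0 < gap t 0) {k : ℕ} {x : ℝ}
    (hk : t k ≤ x) (hk' : x ≤ t (k + 1)) (j : ℕ) : interpLine t k x ≤ interpLine t j x :=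
  (le_total k j).elim (interpLine_le_of_le hmono hpos · hk') (interpLine_le_of_ge hmono hpos · hk)

lemma lt_segmentIndex_succ (hmono : Monotone (gap t)) (hpos : 0 < gap t 0) (x : ℝ) :
    x < t (segmentIndex t x + 1) :=
  Nat.sInf_mem (exists_lt_succ hmono hpos x)

lemma segmentIndex_le {x : ℝ} (hx : t 0 ≤ x) : t (segmentIndex t x) ≤ x := by
  rcases h : segmentIndex t x with _ | m
  · exact hx
  · exact not_lt.mp (Nat.notMem_of_lt_sInf (h ▸ m.lt_succ_self : m < segmentIndex t x))

lemma interp_le_interpLine (hmono : Monotone (gap t)) (hpos : 0 < gap t 0) {x : ℝ}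
    (hx : t 0 ≤ x) (j : ℕ) : interp t x ≤ interpLine t j x :=
  interpLine_le_interpLine hmono hpos (segmentIndex_le hx) (lt_segmentIndex_succ hmono hpos x).le j

lemma interp_eq_interpLine (hmono : Monotone (gap t)) (hpos : 0 < gap t 0) {k : ℕ} {x : ℝ}
    (hk : t k ≤ x) (hk' : x ≤ t (k + 1)) : interp t x = interpLine t k x := by
  have ht := (strictMono_of_monotone_gap hmono hpos).monotone
  exact le_antisymm (interp_le_interpLine hmono hpos ((ht k.zero_le).trans hk) k)
    (interpLine_le_interpLine hmono hpos hk hk' _)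

lemma interp_breakpoint (hmono : Monotone (gap t)) (hpos : 0 < gap t 0) (k : ℕ) :
    interp t (t k) = k := by
  have ht := (strictMono_of_monotone_gap hmono hpos).monotone
  simp [interp_eq_interpLine hmono hpos le_rfl (ht k.le_succ), interpLine]

lemma concaveOn_interp (hmono : Monotone (gap t)) (hpos : 0 < gap t 0) :
    ConcaveOn ℝ (Ici (t 0)) (interp t) := by
  refine ⟨convex_Ici _, fun x hx y hy a b ha hb hab => ?_⟩
  set m := segmentIndex t (a • x + b • y)
  have hg := (gap_pos hmono hpos m).ne'
  calc a • interp t x + b • interp t y ≤ a • interpLine t m x + b • interpLine t m y := by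
        gcongr
        exacts [interp_le_interpLine hmono hpos hx m, interp_le_interpLine hmono hpos hy m]
    _ = interpLine t m (a • x + b • y) := by
        simp only [interpLine, smul_eq_mul]
        field_simp
        linear_combination (m * gap t m - t m) * hab

lemma strictMonoOn_interp (hmono : Monotone (gap t)) (hpos : 0 < gap t 0) :
    StrictMonoOn (interp t) (Ici (t 0)) := by
  intro x hx y _ hxy
  set m := segmentIndex t y
  calc interp t x ≤ interpLine t m x := interp_le_interpLine hmono hpos hx m
    _ < interpLine t m y := by
      unfold interpLine
      gcongr
      exact gap_pos hmono hpos m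

lemma lipschitzOnWith_interp (hmono : Monotone (gap t)) (hone : 1 ≤ gap t 0) :
    LipschitzOnWith 1 (interp t) (Ici (t 0)) := by
  have hpos : 0 < gap t 0 := one_pos.trans_le hone
  refine LipschitzOnWith.of_le_add fun x hx y hy => ?_
  rcases le_total x y with hxy | hyx
  · linarith [(strictMonoOn_interp hmono hpos).monotoneOn hx hy hxy, dist_nonneg (x := x) (y := y)]
  · set m := segmentIndex t y
    have hg : 1 ≤ gap t m := hone.trans (hmono m.zero_le)
    calc interp t x ≤ interpLine t m x := interp_le_interpLine hmono hpos hx m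
      _ = interp t y + (x - y) / gap t m := by simp only [interp, interpLine, m]; ring
      _ ≤ interp t y + dist x y := by
        rw [Real.dist_eq, abs_of_nonneg (sub_nonneg.mpr hyx)]
        gcongr
        exact div_le_self (sub_nonneg.mpr hyx) hg

end Interp

lemma ConcaveOn.mul_le_of_map_zero {f : ℝ → ℝ} (hf : ConcaveOn ℝ (Ici 0) f) (h0 : f 0 = 0)
    {θ x : ℝ} (hθ₀ : 0 ≤ θ) (hθ₁ : θ ≤ 1) (hx : 0 ≤ x) : θ * f x ≤ f (θ * x) := by
  have := hf.2 (mem_Ici.mpr hx) self_mem_Ici hθ₀ (sub_nonneg.mpr hθ₁) (add_sub_cancel θ 1)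
  simpa [h0] using this

lemma ConcaveOn.map_add_le_of_map_zero {f : ℝ → ℝ} (hf : ConcaveOn ℝ (Ici 0) f) (h0 : f 0 = 0)
    {a b : ℝ} (ha : 0 ≤ a) (hb : 0 ≤ b) : f (a + b) ≤ f a + f b := by
  rcases ha.eq_or_lt with rfl | ha'
  · simp [h0]
  have hs : 0 < a + b := by linarith
  have hfa := hf.mul_le_of_map_zero h0 (div_nonneg ha hs.le)
    (div_le_one_of_le₀ (by linarith) hs.le) hs.le
  have hfb := hf.mul_le_of_map_zero h0 (div_nonneg hb hs.le)
    (div_le_one_of_le₀ (by linarith) hs.le) hs.le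
  rw [div_mul_cancel₀ _ hs.ne'] at hfa hfb
  calc f (a + b) = a / (a + b) * f (a + b) + b / (a + b) * f (a + b) := by
        field_simp
    _ ≤ f a + f b := add_le_add hfa hfb

lemma isMetric_dist (X : Type*) [MetricSpace X] : IsMetric fun x y : X => dist x y :=
  ⟨fun _ _ => dist_nonneg, fun _ _ => dist_eq_zero, dist_comm, dist_triangle⟩

lemma IsMetric.comp {X : Type*} {d : X → X → ℝ} (hd : IsMetric d) {c : ℝ → ℝ} (hc0 : c 0 = 0)
    (hmono : StrictMonoOn c (Ici 0)) (hadd : ∀ a b, 0 ≤ a → 0 ≤ b → c (a + b) ≤ c a + c b) :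
    IsMetric fun x y => c (d x y) := by
  obtain ⟨hnonneg, hzero, hsymm, htri⟩ := hd
  refine ⟨fun x y => hc0 ▸ hmono.monotoneOn self_mem_Ici (hnonneg x y) (hnonneg x y),
    fun x y => ?_, fun x y => congrArg c (hsymm x y), fun x y z => ?_⟩
  · show c (d x y) = 0 ↔ x = y
    rw [← hc0]
    exact (hmono.injOn.eq_iff (hnonneg x y) self_mem_Ici).trans (hzero x y)
  · have hxyz := add_nonneg (hnonneg x y) (hnonneg y z)
    exact (hmono.monotoneOn (hnonneg x z) hxyz (htri x y z)).trans
      (hadd _ _ (hnonneg x y) (hnonneg y z))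

lemma IsControlFunction.comp {X : Type*} {d : X → X → ℝ} (hd : ∀ x y, 0 ≤ d x y) {n : ℕ}
    {D D' c : ℝ → ℝ} (hD : IsControlFunction d n D) (hc : MonotoneOn c (Ici 0))
    (hscale : ∀ r, 0 < r → ∃ s, 0 < s ∧ r ≤ c s ∧ ∃ s', D s ≤ s' ∧ c s' ≤ D' r) :
    IsControlFunction (fun x y => c (d x y)) n D' := by
  intro r hr
  obtain ⟨s, hs, hrs, s', hss', hs'⟩ := hscale r hr
  obtain ⟨𝒰, hcover, hdisj, hdiam⟩ := hD s hs
  refine ⟨𝒰, hcover, fun i U hU V hV hUV u hu v hv => ?_, fun i U hU u hu v hv => ?_⟩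
  · exact hrs.trans (hc hs.le (hd u v) (hdisj i U hU V hV hUV u hu v hv))
  · have hduv := (hdiam i U hU u hu v hv).trans hss'
    exact (hc (hd u v) ((hd u v).trans hduv) hduv).trans hs'

/-- The first term of the `max` keeps the gaps nondecreasing, the second one ensures
`D (t k) ≤ t (k + 1)`. -/
noncomputable def controlBreakpoints (D : ℝ → ℝ) : ℕ → ℝ
  | 0 => 0
  | 1 => max 1 (D 0)
  | k + 2 => max (2 * controlBreakpoints D (k + 1) - controlBreakpoints D k)
      (D (controlBreakpoints D (k + 1)))

section ControlBreakpoints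

variable (D : ℝ → ℝ)

lemma controlBreakpoints_zero : controlBreakpoints D 0 = 0 := rfl

lemma one_le_gap_controlBreakpoints_zero : 1 ≤ gap (controlBreakpoints D) 0 := by
  simp [gap, controlBreakpoints]

lemma gap_controlBreakpoints_zero_pos : 0 < gap (controlBreakpoints D) 0 :=
  one_pos.trans_le (one_le_gap_controlBreakpoints_zero D)

lemma monotone_gap_controlBreakpoints : Monotone (gap (controlBreakpoints D)) :=
  monotone_nat_of_le_succ fun k => by
    simp only [gap, controlBreakpoints]
    linarith [le_max_left (2 * controlBreakpoints D (k + 1) - controlBreakpoints D k)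
      (D (controlBreakpoints D (k + 1)))]

lemma le_controlBreakpoints_succ (k : ℕ) :
    D (controlBreakpoints D k) ≤ controlBreakpoints D (k + 1) := by
  cases k with
  | zero => exact le_max_right _ _
  | succ k => exact le_max_right _ _

lemma strictMono_controlBreakpoints : StrictMono (controlBreakpoints D) :=
  strictMono_of_monotone_gap (monotone_gap_controlBreakpoints D)
    (gap_controlBreakpoints_zero_pos D)

noncomputable def controlRescaling : ℝ → ℝ := interp (controlBreakpoints D)

lemma controlRescaling_controlBreakpoints (k : ℕ) :
    controlRescaling D (controlBreakpoints D k) = k :=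
  interp_breakpoint (monotone_gap_controlBreakpoints D) (gap_controlBreakpoints_zero_pos D) k

lemma controlRescaling_zero : controlRescaling D 0 = 0 := by
  simpa [controlBreakpoints_zero] using controlRescaling_controlBreakpoints D 0

lemma concaveOn_controlRescaling : ConcaveOn ℝ (Ici 0) (controlRescaling D) :=
  concaveOn_interp (monotone_gap_controlBreakpoints D) (gap_controlBreakpoints_zero_pos D)

lemma strictMonoOn_controlRescaling : StrictMonoOn (controlRescaling D) (Ici 0) :=
  strictMonoOn_interp (monotone_gap_controlBreakpoints D) (gap_controlBreakpoints_zero_pos D)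

lemma continuousOn_controlRescaling : ContinuousOn (controlRescaling D) (Ici 0) :=
  (lipschitzOnWith_interp (monotone_gap_controlBreakpoints D)
    (one_le_gap_controlBreakpoints_zero D)).continuousOn

lemma controlRescaling_nonneg {r : ℝ} (hr : 0 ≤ r) : 0 ≤ controlRescaling D r :=
  controlRescaling_zero D ▸ (strictMonoOn_controlRescaling D).monotoneOn self_mem_Ici hr hr

end ControlBreakpoints

theorem stmt_8 (X : Type*) [MetricSpace X] (n : ℕ)
    (hdim : ∃ D : ℝ → ℝ, IsControlFunction (fun x y : X => dist x y) n D) :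
    ∃ c : ℝ → ℝ,
      (∀ r, 0 ≤ r → 0 ≤ c r) ∧
      ConcaveOn ℝ (Set.Ici (0 : ℝ)) c ∧
      StrictMonoOn c (Set.Ici (0 : ℝ)) ∧
      ContinuousOn c (Set.Ici (0 : ℝ)) ∧
      (∀ M : ℝ, ∃ r, 0 ≤ r ∧ M ≤ c r) ∧
      c 0 = 0 ∧
      IsMetric (fun x y : X => c (dist x y)) ∧
      IsControlFunction (fun x y : X => c (dist x y)) n (fun r => r + 2) := by
  obtain ⟨D, hD⟩ := hdim
  have hconc := concaveOn_controlRescaling D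
  have hstrict := strictMonoOn_controlRescaling D
  have hc0 := controlRescaling_zero D
  refine ⟨controlRescaling D, fun r => controlRescaling_nonneg D, hconc, hstrict,
    continuousOn_controlRescaling D, fun M => ⟨controlBreakpoints D ⌈M⌉₊, ?_, ?_⟩, hc0,
    (isMetric_dist X).comp hc0 hstrict fun _ _ => hconc.map_add_le_of_map_zero hc0,
    hD.comp (fun _ _ => dist_nonneg) hstrict.monotoneOn fun r hr => ?_⟩
  · exact controlBreakpoints_zero D ▸ (strictMono_controlBreakpoints D).monotone ⌈M⌉₊.zero_le
  · rw [controlRescaling_controlBreakpoints]; exact Nat.le_ceil M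
  refine ⟨controlBreakpoints D ⌈r⌉₊,
    controlBreakpoints_zero D ▸ strictMono_controlBreakpoints D (Nat.ceil_pos.mpr hr), ?_,
    controlBreakpoints D (⌈r⌉₊ + 1), le_controlBreakpoints_succ D _, ?_⟩
  · rw [controlRescaling_controlBreakpoints]; exact Nat.le_ceil r
  · rw [controlRescaling_controlBreakpoints]; push_cast; linarith [Nat.ceil_lt_add_one hr.le]
end

section
/- Let (X,d) be a metric space and n a natural number such that (X,d) admits a real-valued n-dimensional control function. Then there exists a function c : [0,∞) → [0,∞) that is concave, strictly increasing, continuous, unbounded, with c(0) = 0, such that the function d''(x,y) = ln(1 + c(d(x,y))) is a metric on X, the affine function D''(r) = r + ln 3 is an n-dimensional control function for (X, d''), and (X, d'') is Gromov hyperbolic: there exists δ ≥ 0 such that d''(x,w) + d''(y,z) ≤ max(d''(x,y) + d''(z,w), d''(x,z) + d''(y,w)) + δ for all x, y, z, w ∈ X. -/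
/-- `d` satisfies the Gromov four-point hyperbolicity condition with some
constant `δ ≥ 0`. -/
def IsGromovHyperbolic {X : Type*} (d : X → X → ℝ) : Prop :=
  ∃ δ : ℝ, 0 ≤ δ ∧ ∀ x y z w : X,
    d x w + d y z ≤ max (d x y + d z w) (d x z + d y w) + δ

/-!
Choose anchors `0 = s₀ < s₁ < ⋯` whose gaps `g k = s (k+1) - s k` are nondecreasing and satisfy
`D (s k) ≤ s (k+1)`, and let `c` be the piecewise-affine function with `c (s k) = k`; it is concave
because its slopes `1 / g k` decrease. Concavity with `c 0 = 0` makes `c` subadditive, so `c ∘ dist`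
is a metric `ρ`. For any metric `ρ`, `d'' = log (1 + ρ)` satisfies
`d'' x z ≤ max (d'' x y) (d'' y z) + log 2`, which forces the four-point condition with `δ = log 4`.
Finally, a control family for `dist` at scale `s k` with `k = ⌈exp r - 1⌉₊` is `r`-disjoint for
`d''`, and its members have `d''`-diameter at most `log (k + 2) ≤ r + log 3`.
-/

open Set Real

noncomputable section GapInterpolation

def gapAnchor (g : ℕ → ℝ) (k : ℕ) : ℝ := ∑ i ∈ Finset.range k, g i

def gapPiece (g : ℕ → ℝ) (k : ℕ) (x : ℝ) : ℝ := k + (x - gapAnchor g k) / g k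

def gapInterp (g : ℕ → ℝ) (x : ℝ) : ℝ := ⨅ k, gapPiece g k x

variable {g : ℕ → ℝ}

@[simp]
lemma gapAnchor_zero : gapAnchor g 0 = 0 := Finset.sum_range_zero g

lemma gapAnchor_succ (k : ℕ) : gapAnchor g (k + 1) = gapAnchor g k + g k :=
  Finset.sum_range_succ g k

lemma gap_pos_s9 (hg : Monotone g) (hg0 : 0 < g 0) (k : ℕ) : 0 < g k :=
  hg0.trans_le (hg k.zero_le)

lemma gapAnchor_le_mul (hg : Monotone g) (k : ℕ) : gapAnchor g k ≤ k * g k := by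
  simpa [gapAnchor] using Finset.sum_le_card_nsmul (Finset.range k) g (g k)
    fun i hi => hg (Finset.mem_range.1 hi).le

lemma mul_le_gapAnchor (hg : Monotone g) (k : ℕ) : k * g 0 ≤ gapAnchor g k := by
  simpa [gapAnchor] using Finset.card_nsmul_le_sum (Finset.range k) g (g 0) fun i _ => hg i.zero_le

lemma strictMono_gapAnchor (hg : Monotone g) (hg0 : 0 < g 0) : StrictMono (gapAnchor g) :=
  strictMono_nat_of_lt_succ fun k => by
    rw [gapAnchor_succ]; linarith [gap_pos_s9 hg hg0 k]

lemma gapAnchor_nonneg (hg : Monotone g) (hg0 : 0 < g 0) (k : ℕ) : 0 ≤ gapAnchor g k := by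
  simpa using (strictMono_gapAnchor hg hg0).monotone k.zero_le

lemma not_bddAbove_range_gapAnchor (hg : Monotone g) (hg0 : 0 < g 0) :
    ¬BddAbove (range (gapAnchor g)) := by
  rw [not_bddAbove_iff]
  intro x
  obtain ⟨k, hk⟩ := exists_nat_gt (x / g 0)
  refine ⟨_, mem_range_self k, ?_⟩
  calc x < k * g 0 := (div_lt_iff₀ hg0).1 hk
    _ ≤ gapAnchor g k := mul_le_gapAnchor hg k

lemma exists_gapAnchor_le_lt (hg : Monotone g) (hg0 : 0 < g 0) {x : ℝ} (hx : 0 ≤ x) :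
    ∃ k, gapAnchor g k ≤ x ∧ x < gapAnchor g (k + 1) := by
  have hcover := iUnion_Ico_map_succ_eq_Ici (f := gapAnchor g)
    (fun k => (strictMono_gapAnchor hg hg0).monotone k.zero_le)
    (not_bddAbove_range_gapAnchor hg hg0)
  have hx' : x ∈ Ici (gapAnchor g ⊥) := by simpa using hx
  rw [← hcover] at hx'
  simpa using hx'

lemma gapPiece_eq_succ_add (hg : Monotone g) (hg0 : 0 < g 0) (k : ℕ) (x : ℝ) :
    gapPiece g k x = k + 1 + (x - gapAnchor g (k + 1)) / g k := by
  have := (gap_pos_s9 hg hg0 k).ne'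
  rw [gapPiece, gapAnchor_succ]
  field_simp
  ring

lemma gapPiece_succ_le (hg : Monotone g) (hg0 : 0 < g 0) {k : ℕ} {x : ℝ}
    (hx : gapAnchor g (k + 1) ≤ x) : gapPiece g (k + 1) x ≤ gapPiece g k x := by
  rw [gapPiece_eq_succ_add hg hg0 k, gapPiece]
  push_cast
  have := gap_pos_s9 hg hg0 k
  gcongr
  exact hg k.le_succ

lemma gapPiece_le_succ (hg : Monotone g) (hg0 : 0 < g 0) {k : ℕ} {x : ℝ}
    (hx : x ≤ gapAnchor g (k + 1)) : gapPiece g k x ≤ gapPiece g (k + 1) x := by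
  rw [gapPiece_eq_succ_add hg hg0 k, gapPiece]
  push_cast
  have hk := gap_pos_s9 hg hg0 k
  have hk1 := gap_pos_s9 hg hg0 (k + 1)
  have : (x - gapAnchor g (k + 1)) / g k ≤ (x - gapAnchor g (k + 1)) / g (k + 1) := by
    rw [div_le_div_iff₀ hk hk1]
    nlinarith [hg k.le_succ]
  linarith

lemma gapPiece_le_of_le (hg : Monotone g) (hg0 : 0 < g 0) {j k : ℕ} (hjk : j ≤ k) {x : ℝ}
    (hx : gapAnchor g k ≤ x) : gapPiece g k x ≤ gapPiece g j x := by
  induction k, hjk using Nat.le_induction with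
  | base => exact le_rfl
  | succ k hjk ih =>
    have hk : gapAnchor g k ≤ x := ((strictMono_gapAnchor hg hg0).monotone k.le_succ).trans hx
    exact (gapPiece_succ_le hg hg0 hx).trans (ih hk)

lemma gapPiece_le_of_ge (hg : Monotone g) (hg0 : 0 < g 0) {j k : ℕ} (hkj : k ≤ j) {x : ℝ}
    (hx : x ≤ gapAnchor g (k + 1)) : gapPiece g k x ≤ gapPiece g j x := by
  induction j, hkj using Nat.le_induction with
  | base => exact le_rfl
  | succ j hkj ih =>
    have hj : x ≤ gapAnchor g (j + 1) :=
      hx.trans ((strictMono_gapAnchor hg hg0).monotone (by omega))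
    exact ih.trans (gapPiece_le_succ hg hg0 hj)

lemma gapPiece_nonneg (hg : Monotone g) (hg0 : 0 < g 0) (k : ℕ) {x : ℝ} (hx : 0 ≤ x) :
    0 ≤ gapPiece g k x := by
  have hk := gap_pos_s9 hg hg0 k
  have : -(k : ℝ) ≤ (x - gapAnchor g k) / g k := by
    rw [le_div_iff₀ hk]
    linarith [gapAnchor_le_mul hg k]
  rw [gapPiece]
  linarith

lemma gapPiece_affine (k : ℕ) {a b : ℝ} (hab : a + b = 1) (x y : ℝ) :
    gapPiece g k (a * x + b * y) = a * gapPiece g k x + b * gapPiece g k y := by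
  obtain rfl : b = 1 - a := by linarith
  simp only [gapPiece]
  ring

lemma bddBelow_range_gapPiece (hg : Monotone g) (hg0 : 0 < g 0) {x : ℝ} (hx : 0 ≤ x) :
    BddBelow (range fun k => gapPiece g k x) :=
  ⟨0, forall_mem_range.2 fun k => gapPiece_nonneg hg hg0 k hx⟩

lemma gapInterp_le_gapPiece (hg : Monotone g) (hg0 : 0 < g 0) (k : ℕ) {x : ℝ} (hx : 0 ≤ x) :
    gapInterp g x ≤ gapPiece g k x :=
  ciInf_le (bddBelow_range_gapPiece hg hg0 hx) k

lemma gapInterp_nonneg (hg : Monotone g) (hg0 : 0 < g 0) {x : ℝ} (hx : 0 ≤ x) :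
    0 ≤ gapInterp g x :=
  le_ciInf fun k => gapPiece_nonneg hg hg0 k hx

lemma gapInterp_eq_gapPiece (hg : Monotone g) (hg0 : 0 < g 0) {k : ℕ} {x : ℝ}
    (h₁ : gapAnchor g k ≤ x) (h₂ : x ≤ gapAnchor g (k + 1)) :
    gapInterp g x = gapPiece g k x := by
  refine le_antisymm (gapInterp_le_gapPiece hg hg0 k ((gapAnchor_nonneg hg hg0 k).trans h₁))
    (le_ciInf fun j => ?_)
  rcases le_total j k with hjk | hkj
  · exact gapPiece_le_of_le hg hg0 hjk h₁
  · exact gapPiece_le_of_ge hg hg0 hkj h₂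

lemma gapInterp_gapAnchor (hg : Monotone g) (hg0 : 0 < g 0) (k : ℕ) :
    gapInterp g (gapAnchor g k) = k := by
  rw [gapInterp_eq_gapPiece hg hg0 le_rfl ((strictMono_gapAnchor hg hg0).monotone k.le_succ),
    gapPiece, sub_self, zero_div, add_zero]

lemma gapInterp_zero (hg : Monotone g) (hg0 : 0 < g 0) : gapInterp g 0 = 0 := by
  simpa using gapInterp_gapAnchor hg hg0 0

lemma strictMonoOn_gapInterp (hg : Monotone g) (hg0 : 0 < g 0) :
    StrictMonoOn (gapInterp g) (Ici 0) := by
  intro x hx y hy hxy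
  obtain ⟨k, h₁, h₂⟩ := exists_gapAnchor_le_lt hg hg0 (mem_Ici.1 hy)
  rw [gapInterp_eq_gapPiece hg hg0 h₁ h₂.le]
  refine (gapInterp_le_gapPiece hg hg0 k hx).trans_lt ?_
  have := gap_pos_s9 hg hg0 k
  simp only [gapPiece]
  gcongr

lemma concaveOn_gapInterp (hg : Monotone g) (hg0 : 0 < g 0) :
    ConcaveOn ℝ (Ici 0) (gapInterp g) := by
  refine ⟨convex_Ici 0, fun x hx y hy a b ha hb hab => le_ciInf fun k => ?_⟩
  rw [smul_eq_mul, smul_eq_mul, smul_eq_mul, smul_eq_mul, gapPiece_affine k hab]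
  gcongr
  · exact gapInterp_le_gapPiece hg hg0 k hx
  · exact gapInterp_le_gapPiece hg hg0 k hy

lemma continuousOn_gapInterp (hg : Monotone g) (hg0 : 0 < g 0) :
    ContinuousOn (gapInterp g) (Ici 0) := by
  refine (concaveOn_gapInterp hg hg0).continuousOn_Ici ?_
  have hfirst : EqOn (gapInterp g) (gapPiece g 0) (Icc 0 (gapAnchor g 1)) := fun x hx =>
    gapInterp_eq_gapPiece hg hg0 (by simpa using hx.1) hx.2
  have hcont : Continuous (gapPiece g 0) := by unfold gapPiece; fun_prop
  have hanchor : 0 < gapAnchor g 1 := by simpa using strictMono_gapAnchor hg hg0 zero_lt_one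
  exact hcont.continuousWithinAt.congr_of_eventuallyEq
    (Filter.eventuallyEq_of_mem (Icc_mem_nhdsGE hanchor) hfirst)
    (hfirst ⟨le_rfl, hanchor.le⟩)

end GapInterpolation

lemma ConcaveOn.map_add_le {c : ℝ → ℝ} (hc : ConcaveOn ℝ (Ici 0) c) (h0 : 0 ≤ c 0) {a b : ℝ}
    (ha : 0 ≤ a) (hb : 0 ≤ b) : c (a + b) ≤ c a + c b := by
  rcases (add_nonneg ha hb).eq_or_lt with hab | hab
  · obtain ⟨rfl, rfl⟩ : a = 0 ∧ b = 0 := ⟨by linarith, by linarith⟩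
    simpa using h0
  have hscale : ∀ u, 0 ≤ u → u ≤ a + b → u / (a + b) * c (a + b) ≤ c u := fun u hu hub => by
    have hw : 0 ≤ 1 - u / (a + b) := sub_nonneg.2 ((div_le_one hab).2 hub)
    have := hc.2 (mem_Ici.2 le_rfl) (mem_Ici.2 hab.le) hw (div_nonneg hu hab.le) (by ring)
    rw [smul_eq_mul, smul_eq_mul, smul_eq_mul, smul_eq_mul, mul_zero, zero_add,
      div_mul_cancel₀ u hab.ne'] at this
    linarith [mul_nonneg hw h0]
  have hsum : a / (a + b) * c (a + b) + b / (a + b) * c (a + b) = c (a + b) := by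
    field_simp
  linarith [hscale a ha (by linarith), hscale b hb (by linarith)]

lemma isMetric_comp_dist {X : Type*} [MetricSpace X] {c : ℝ → ℝ}
    (hc : ConcaveOn ℝ (Ici 0) c) (hmono : StrictMonoOn c (Ici 0)) (h0 : c 0 = 0) :
    IsMetric fun x y : X => c (dist x y) := by
  have hnonneg : ∀ x y : X, 0 ≤ c (dist x y) := fun x y =>
    h0 ▸ hmono.monotoneOn (mem_Ici.2 le_rfl) (mem_Ici.2 dist_nonneg) dist_nonneg
  refine ⟨hnonneg, fun x y => ?_, fun x y => congrArg c (dist_comm x y), fun x y z => ?_⟩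
  · show c (dist x y) = 0 ↔ x = y
    rw [← h0, hmono.injOn.eq_iff dist_nonneg (mem_Ici.2 le_rfl), dist_eq_zero]
  · calc c (dist x z) ≤ c (dist x y + dist y z) :=
          hmono.monotoneOn dist_nonneg (add_nonneg dist_nonneg dist_nonneg) (dist_triangle x y z)
      _ ≤ c (dist x y) + c (dist y z) := hc.map_add_le h0.ge dist_nonneg dist_nonneg

lemma IsMetric.log_one_add {X : Type*} {d : X → X → ℝ} (hd : IsMetric d) :
    IsMetric fun x y => log (1 + d x y) := by
  obtain ⟨hnonneg, hzero, hsymm, htri⟩ := hd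
  refine ⟨fun x y => log_nonneg (by linarith [hnonneg x y]), fun x y => ?_,
    fun x y => congrArg (fun t => log (1 + t)) (hsymm x y), fun x y z => ?_⟩
  · rw [← hzero, log_eq_zero]
    constructor
    · rintro (h | h | h) <;> linarith [hnonneg x y]
    · intro h
      simp [h]
  · have hxy := hnonneg x y
    have hyz := hnonneg y z
    rw [← log_mul (by linarith) (by linarith)]
    refine log_le_log (by linarith [hnonneg x z]) ?_
    nlinarith [htri x y z]

lemma Real.log_one_add_le_max_add_log_two {a b c : ℝ} (ha : 0 ≤ a) (hb : 0 ≤ b) (hc : 0 ≤ c)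
    (h : a ≤ b + c) : log (1 + a) ≤ max (log (1 + b)) (log (1 + c)) + log 2 := by
  wlog hbc : b ≤ c generalizing b c
  · rw [max_comm]
    exact this hc hb (by linarith) (by linarith)
  calc log (1 + a) ≤ log (2 * (1 + c)) := log_le_log (by linarith) (by linarith)
    _ = log (1 + c) + log 2 := by rw [log_mul two_ne_zero (by linarith), add_comm]
    _ ≤ max (log (1 + b)) (log (1 + c)) + log 2 := by gcongr; exact le_max_right _ _

lemma min_max_add_min_max_le {α : Type*} [AddCommMonoid α] [LinearOrder α]
    [IsOrderedCancelAddMonoid α] (p q s t : α) :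
    min (max p t) (max s q) + min (max p s) (max t q) ≤ max (p + q) (s + t) := by
  grind

lemma isGromovHyperbolic_of_le_max_add {X : Type*} {d : X → X → ℝ} {ε : ℝ} (hε : 0 ≤ ε)
    (hsymm : ∀ x y, d x y = d y x) (h : ∀ x y z, d x z ≤ max (d x y) (d y z) + ε) :
    IsGromovHyperbolic d := by
  refine ⟨2 * ε, by positivity, fun x y z w => ?_⟩
  have hxw : d x w ≤ min (max (d x y) (d y w)) (max (d x z) (d z w)) + ε := by
    rw [← min_add_add_right]
    exact le_min (h x y w) (h x z w)
  have hyz : d y z ≤ min (max (d x y) (d x z)) (max (d y w) (d z w)) + ε := by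
    rw [← min_add_add_right, hsymm x y, hsymm z w]
    exact le_min (h y x z) (h y w z)
  linarith [min_max_add_min_max_le (d x y) (d z w) (d x z) (d y w)]

lemma IsMetric.isGromovHyperbolic_log_one_add {X : Type*} {d : X → X → ℝ} (hd : IsMetric d) :
    IsGromovHyperbolic fun x y => log (1 + d x y) := by
  obtain ⟨hnonneg, -, hsymm, htri⟩ := hd
  refine isGromovHyperbolic_of_le_max_add (log_nonneg one_le_two)
    (fun x y => congrArg (fun t => log (1 + t)) (hsymm x y))
    fun x y z => ?_
  exact log_one_add_le_max_add_log_two (hnonneg x z) (hnonneg x y) (hnonneg y z) (htri x y z)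

lemma IsControlFunction.of_scale {X : Type*} {d d' : X → X → ℝ} {n : ℕ} {D D' : ℝ → ℝ}
    (hD : IsControlFunction d n D)
    (h : ∀ r > 0, ∃ R > 0, (∀ u v, R ≤ d u v → r ≤ d' u v) ∧ ∀ u v, d u v ≤ D R → d' u v ≤ D' r) :
    IsControlFunction d' n D' := by
  intro r hr
  obtain ⟨R, hR, hfar, hnear⟩ := h r hr
  obtain ⟨𝒰, hcover, hdisj, hdiam⟩ := hD R hR
  exact ⟨𝒰, hcover, fun i U hU V hV hUV u hu v hv => hfar u v (hdisj i U hU V hV hUV u hu v hv),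
    fun i U hU u hu v hv => hnear u v (hdiam i U hU u hu v hv)⟩

lemma isControlFunction_log_one_add_gapInterp {X : Type*} [MetricSpace X] {n : ℕ}
    {D : ℝ → ℝ} {g : ℕ → ℝ} (hg : Monotone g) (hg0 : 0 < g 0)
    (hgD : ∀ k, D (gapAnchor g k) ≤ gapAnchor g (k + 1))
    (hD : IsControlFunction (fun x y : X => dist x y) n D) :
    IsControlFunction (fun x y : X => log (1 + gapInterp g (dist x y))) n
      (fun r => r + log 3) := by
  refine hD.of_scale fun r hr => ?_
  have hexp : 1 < exp r := one_lt_exp_iff.2 hr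
  set k := ⌈exp r - 1⌉₊
  have hk_ge : exp r - 1 ≤ k := Nat.le_ceil _
  have hk_lt : (k : ℝ) < exp r := by linarith [Nat.ceil_lt_add_one (by linarith : 0 ≤ exp r - 1)]
  have hk_pos : 0 < k := Nat.ceil_pos.2 (by linarith)
  have hmono := (strictMonoOn_gapInterp hg hg0).monotoneOn
  have hpos : ∀ u v : X, 0 < 1 + gapInterp g (dist u v) := fun u v => by
    linarith [gapInterp_nonneg hg hg0 (dist_nonneg (x := u) (y := v))]
  refine ⟨gapAnchor g k, by simpa using strictMono_gapAnchor hg hg0 hk_pos, fun u v huv => ?_,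
    fun u v huv => ?_⟩
  · have := hmono (gapAnchor_nonneg hg hg0 k) dist_nonneg huv
    rw [gapInterp_gapAnchor hg hg0] at this
    rw [le_log_iff_exp_le (hpos u v)]
    linarith
  · have := hmono dist_nonneg (gapAnchor_nonneg hg hg0 (k + 1)) (huv.trans (hgD k))
    rw [gapInterp_gapAnchor hg hg0] at this
    rw [log_le_iff_le_exp (hpos u v), exp_add, exp_log three_pos]
    push_cast at this
    linarith

noncomputable section ControlGap

/-- The pairs `(gapAnchor g k, g k)` for the gap sequence `g = controlGap D`, built together since
each gap is chosen after the anchor it starts from. -/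
def controlAnchorGap (D : ℝ → ℝ) : ℕ → ℝ × ℝ
  | 0 => (0, max 1 (D 0))
  | k + 1 =>
    let s := (controlAnchorGap D k).1 + (controlAnchorGap D k).2
    (s, max (controlAnchorGap D k).2 (D s - s))

def controlGap (D : ℝ → ℝ) (k : ℕ) : ℝ := (controlAnchorGap D k).2

variable (D : ℝ → ℝ)

lemma monotone_controlGap : Monotone (controlGap D) :=
  monotone_nat_of_le_succ fun _ => le_max_left _ _

lemma controlGap_zero_pos : 0 < controlGap D 0 := lt_max_of_lt_left one_pos

lemma gapAnchor_controlGap (k : ℕ) : gapAnchor (controlGap D) k = (controlAnchorGap D k).1 := by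
  induction k with
  | zero => rfl
  | succ k ih => rw [gapAnchor_succ, ih]; rfl

lemma le_gapAnchor_controlGap_succ (k : ℕ) :
    D (gapAnchor (controlGap D) k) ≤ gapAnchor (controlGap D) (k + 1) := by
  rw [gapAnchor_succ, gapAnchor_controlGap]
  cases k with
  | zero => simp [controlGap, controlAnchorGap]
  | succ k => exact sub_le_iff_le_add'.1 (le_max_right (controlAnchorGap D k).2 _)

end ControlGap

theorem stmt_9 (X : Type*) [MetricSpace X] (n : ℕ)
    (hdim : ∃ D : ℝ → ℝ, IsControlFunction (fun x y : X => dist x y) n D) :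
    ∃ c : ℝ → ℝ,
      (∀ r, 0 ≤ r → 0 ≤ c r) ∧
      ConcaveOn ℝ (Set.Ici (0 : ℝ)) c ∧
      StrictMonoOn c (Set.Ici (0 : ℝ)) ∧
      ContinuousOn c (Set.Ici (0 : ℝ)) ∧
      (∀ M : ℝ, ∃ r, 0 ≤ r ∧ M ≤ c r) ∧
      c 0 = 0 ∧
      IsMetric (fun x y : X => Real.log (1 + c (dist x y))) ∧
      IsControlFunction (fun x y : X => Real.log (1 + c (dist x y))) n
        (fun r => r + Real.log 3) ∧
      IsGromovHyperbolic (fun x y : X => Real.log (1 + c (dist x y))) := by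
  obtain ⟨D, hD⟩ := hdim
  have hg := monotone_controlGap D
  have hg0 := controlGap_zero_pos D
  have hc := concaveOn_gapInterp hg hg0
  have hmono := strictMonoOn_gapInterp hg hg0
  have h0 := gapInterp_zero hg hg0
  have hmetric := isMetric_comp_dist (X := X) hc hmono h0
  refine ⟨gapInterp (controlGap D), fun r hr => gapInterp_nonneg hg hg0 hr, hc, hmono,
    continuousOn_gapInterp hg hg0, fun M => ?_, h0, hmetric.log_one_add,
    isControlFunction_log_one_add_gapInterp hg hg0 (le_gapAnchor_controlGap_succ D) hD,
    hmetric.isGromovHyperbolic_log_one_add⟩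
  refine ⟨gapAnchor (controlGap D) ⌈M⌉₊, gapAnchor_nonneg hg hg0 _, ?_⟩
  rw [gapInterp_gapAnchor hg hg0]
  exact Nat.le_ceil M
end

section
/- Suppose there exist metric spaces (X₁,d₁), (X₂,d₂) and natural numbers n₁, n₂, m with m < n₁ + n₂ such that: each (Xᵢ,dᵢ) admits a real-valued nᵢ-dimensional control function but admits no real-valued (nᵢ−1)-dimensional control function, and the product X₁ × X₂ with the sup metric admits a real-valued m-dimensional control function. Then there exist metric spaces (Y₁, e₁), (Y₂, e₂) such that each (Yᵢ, eᵢ) admits an affine nᵢ-dimensional control function but admits no real-valued (nᵢ−1)-dimensional control function, and Y₁ × Y₂ with the sup metric admits an affine m-dimensional control function; in particular the asymptotic Assouad–Nagata dimension of the product is strictly less than the sum of the asymptotic Assouad–Nagata dimensions of the factors. -/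
/-!
Replace each metric `d` by `f ∘ d`, where `f t = ⨅ k, (k + t / r k)` for a sequence `r` that
at least doubles at each step and satisfies `D (r k) ≤ r (k + 1)` for the three given control
functions `D`. As an infimum of increasing affine functions with nonnegative values at `0`, `f`
is monotone and subadditive, so `f ∘ d` is again a metric, and the product of the tamed metrics is
the tamed product metric. Since `f` is monotone and unbounded, a control function for `f ∘ d`
yields one for `d`, so the lower bounds `n₁`, `n₂` survive. On the other hand
`f (r k) ≥ k + 1` and `f (r (k + 1)) ≤ k + 2`, so covering at scale `r ⌈s⌉₊` for `d` gives a
covering at scale `s` for `f ∘ d` by sets of diameter at most `s + 3`.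
-/

lemma apply_add_le_of_mul_apply_le {f : ℝ → ℝ}
    (hf : ∀ l c, 0 ≤ l → l ≤ 1 → l * f c ≤ f (l * c)) {a b : ℝ} (ha : 0 ≤ a) (hb : 0 ≤ b) :
    f (a + b) ≤ f a + f b := by
  rcases (add_nonneg ha hb).eq_or_lt with hab | hab
  · obtain ⟨rfl, rfl⟩ : a = 0 ∧ b = 0 := ⟨by linarith, by linarith⟩
    simpa using hf 0 0 le_rfl zero_le_one
  · have hfa := hf (a / (a + b)) (a + b) (by positivity) ((div_le_one hab).2 (by linarith))
    have hfb := hf (b / (a + b)) (a + b) (by positivity) ((div_le_one hab).2 (by linarith))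
    rw [div_mul_cancel₀ _ hab.ne'] at hfa hfb
    calc f (a + b) = a / (a + b) * f (a + b) + b / (a + b) * f (a + b) := by
          field_simp
      _ ≤ f a + f b := add_le_add hfa hfb

lemma IsMetric.comp_s11 {X : Type*} {d : X → X → ℝ} (hd : IsMetric d) {f : ℝ → ℝ}
    (hf : Monotone f) (hf0 : f 0 = 0) (hf_pos : ∀ t, 0 < t → 0 < f t)
    (hf_add : ∀ a b, 0 ≤ a → 0 ≤ b → f (a + b) ≤ f a + f b) :
    IsMetric fun x y => f (d x y) := by
  obtain ⟨h_nonneg, h_eq_zero, h_symm, h_triangle⟩ := hd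
  refine ⟨fun x y => hf0 ▸ hf (h_nonneg x y), fun x y => ⟨fun h => ?_, ?_⟩,
    fun x y => congrArg f (h_symm x y), fun x y z => ?_⟩
  · by_contra hxy
    have hpos := (h_nonneg x y).lt_of_ne' (mt (h_eq_zero x y).1 hxy)
    exact (hf_pos _ hpos).ne' h
  · rintro rfl
    exact ((h_eq_zero x x).2 rfl).symm ▸ hf0
  · exact (hf (h_triangle x y z)).trans (hf_add _ _ (h_nonneg x y) (h_nonneg y z))

lemma IsControlFunction.of_comp {X : Type*} {d : X → X → ℝ} {n : ℕ} {f D : ℝ → ℝ}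
    (hf : Monotone f) (hf_unbdd : ∀ S, ∃ R, S < f R)
    (hD : IsControlFunction (fun x y => f (d x y)) n D) :
    ∃ D' : ℝ → ℝ, IsControlFunction d n D' := by
  choose R hR using hf_unbdd
  refine ⟨fun t => R (D (|f t| + 1)), fun t _ => ?_⟩
  obtain ⟨𝒰, h_cover, h_disj, h_diam⟩ := hD (|f t| + 1) (by positivity)
  refine ⟨𝒰, h_cover, fun i U hU V hV hUV u hu v hv => ?_, fun i U hU u hu v hv => ?_⟩
  · by_contra! h
    have := h_disj i U hU V hV hUV u hu v hv
    linarith [hf h.le, le_abs_self (f t)]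
  · by_contra! h
    linarith [h_diam i U hU u hu v hv, hf h.le, hR (D (|f t| + 1))]

noncomputable def tame (r : ℕ → ℝ) (t : ℝ) : ℝ :=
  ⨅ k : ℕ, ((k : ℝ) + t / r k)

section Tame

variable {r : ℕ → ℝ} (hr_pos : ∀ k, 0 < r k) (hr : ∀ k, 2 * r k ≤ r (k + 1))
include hr_pos hr

lemma succ_mul_le_of_two_mul_le (k j : ℕ) : ((j : ℝ) + 1) * r k ≤ r (k + j) := by
  induction j with
  | zero => simp
  | succ j ih =>
    have := hr (k + j)
    have := hr_pos k
    rw [← add_assoc]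
    push_cast
    nlinarith

lemma bddBelow_range_tame (t : ℝ) : BddBelow (Set.range fun k : ℕ => (k : ℝ) + t / r k) := by
  have hr_mono : Monotone r := monotone_nat_of_le_succ fun k => by linarith [hr k, hr_pos k]
  refine ⟨min 0 (t / r 0), ?_⟩
  rintro _ ⟨k, rfl⟩
  have hk : (0 : ℝ) ≤ k := k.cast_nonneg
  rcases le_total 0 t with ht | ht
  · have : 0 ≤ t / r k := div_nonneg ht (hr_pos k).le
    linarith [min_le_left 0 (t / r 0)]
  · have := div_le_div_of_nonneg_left (neg_nonneg.2 ht) (hr_pos 0) (hr_mono k.zero_le)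
    rw [neg_div, neg_div] at this
    linarith [min_le_right 0 (t / r 0)]

lemma tame_le (k : ℕ) (t : ℝ) : tame r t ≤ k + t / r k :=
  ciInf_le (bddBelow_range_tame hr_pos hr t) k

lemma monotone_tame : Monotone (tame r) := fun a b hab =>
  ciInf_mono (bddBelow_range_tame hr_pos hr a) fun k => by
    gcongr
    exact (hr_pos k).le

lemma tame_zero : tame r 0 = 0 :=
  le_antisymm (by simpa using tame_le hr_pos hr 0 0)
    (le_ciInf fun k => by simp)

omit hr in
lemma tame_pos {t : ℝ} (ht : 0 < t) : 0 < tame r t := by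
  have hlow : min (t / r 0) 1 ≤ tame r t := by
    refine le_ciInf fun k => ?_
    rcases k with _ | k
    · simp
    · have : 0 ≤ t / r (k + 1) := div_nonneg ht.le (hr_pos _).le
      push_cast
      linarith [min_le_right (t / r 0) 1, (k.cast_nonneg : (0 : ℝ) ≤ k)]
  exact (lt_min (div_pos ht (hr_pos 0)) one_pos).trans_le hlow

lemma mul_tame_le {l : ℝ} (c : ℝ) (hl₀ : 0 ≤ l) (hl₁ : l ≤ 1) :
    l * tame r c ≤ tame r (l * c) :=
  le_ciInf fun k => calc
    l * tame r c ≤ l * (k + c / r k) := mul_le_mul_of_nonneg_left (tame_le hr_pos hr k c) hl₀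
    _ = l * k + l * c / r k := by ring
    _ ≤ k + l * c / r k := by nlinarith [(k.cast_nonneg : (0 : ℝ) ≤ k)]

lemma tame_add_le {a b : ℝ} (ha : 0 ≤ a) (hb : 0 ≤ b) :
    tame r (a + b) ≤ tame r a + tame r b :=
  apply_add_le_of_mul_apply_le (fun _ c hl₀ hl₁ => mul_tame_le hr_pos hr c hl₀ hl₁) ha hb

lemma succ_le_tame_apply (k : ℕ) : (k : ℝ) + 1 ≤ tame r (r k) := by
  refine le_ciInf fun j => ?_
  rcases le_or_gt j k with hjk | hkj
  · obtain ⟨i, rfl⟩ := Nat.exists_eq_add_of_le hjk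
    have h := succ_mul_le_of_two_mul_le hr_pos hr j i
    rw [← le_div_iff₀ (hr_pos j)] at h
    push_cast
    linarith
  · have : 0 ≤ r k / r j := div_nonneg (hr_pos k).le (hr_pos j).le
    have : (k : ℝ) + 1 ≤ j := by exact_mod_cast hkj
    linarith

lemma tame_apply_succ_le (k : ℕ) : tame r (r (k + 1)) ≤ k + 2 := by
  have := tame_le hr_pos hr (k + 1) (r (k + 1))
  rw [div_self (hr_pos _).ne'] at this
  push_cast at this
  linarith

lemma exists_lt_tame (S : ℝ) : ∃ R, S < tame r R :=
  ⟨r ⌈S⌉₊, by linarith [Nat.le_ceil S, succ_le_tame_apply hr_pos hr ⌈S⌉₊]⟩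


lemma IsMetric.tame_comp {X : Type*} {d : X → X → ℝ} (hd : IsMetric d) :
    IsMetric fun x y => tame r (d x y) :=
  hd.comp_s11 (monotone_tame hr_pos hr) (tame_zero hr_pos hr) (fun _ => tame_pos hr_pos)
    (fun _ _ => tame_add_le hr_pos hr)

lemma IsControlFunction.tame_comp {X : Type*} {d : X → X → ℝ} {n : ℕ} {D : ℝ → ℝ}
    (hD : IsControlFunction d n D) (hDr : ∀ k, D (r k) ≤ r (k + 1)) :
    IsControlFunction (fun x y => tame r (d x y)) n (fun s => 1 * s + 3) := by
  intro s hs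
  obtain ⟨𝒰, h_cover, h_disj, h_diam⟩ := hD (r ⌈s⌉₊) (hr_pos _)
  refine ⟨𝒰, h_cover, fun i U hU V hV hUV u hu v hv => ?_, fun i U hU u hu v hv => ?_⟩
  · calc s ≤ ⌈s⌉₊ + 1 := by linarith [Nat.le_ceil s]
      _ ≤ tame r (r ⌈s⌉₊) := succ_le_tame_apply hr_pos hr _
      _ ≤ tame r (d u v) := monotone_tame hr_pos hr (h_disj i U hU V hV hUV u hu v hv)
  · calc tame r (d u v) ≤ tame r (r (⌈s⌉₊ + 1)) :=
          monotone_tame hr_pos hr ((h_diam i U hU u hu v hv).trans (hDr _))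
      _ ≤ ⌈s⌉₊ + 2 := tame_apply_succ_le hr_pos hr _
      _ ≤ 1 * s + 3 := by linarith [Nat.ceil_lt_add_one hs.le]

end Tame

lemma exists_two_mul_le_and_le (D : ℝ → ℝ) :
    ∃ r : ℕ → ℝ, (∀ k, 0 < r k) ∧ (∀ k, 2 * r k ≤ r (k + 1)) ∧
      ∀ k, D (r k) ≤ r (k + 1) := by
  let r : ℕ → ℝ := fun k => Nat.rec 1 (fun _ p => max (2 * p) (D p)) k
  have hr : ∀ k, 2 * r k ≤ r (k + 1) := fun k => le_max_left _ _
  refine ⟨r, fun k => ?_, hr, fun k => le_max_right _ _⟩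
  induction k with
  | zero => exact one_pos
  | succ k ih => linarith [hr k]

theorem stmt_11_general {X₁ X₂ : Type} (d₁ : X₁ → X₁ → ℝ) (d₂ : X₂ → X₂ → ℝ)
    (hmet₁ : IsMetric d₁) (hmet₂ : IsMetric d₂)
    (n₁ n₂ m : ℕ)
    (hdim₁ : ∃ D : ℝ → ℝ, IsControlFunction d₁ n₁ D)
    (hnot₁ : ¬ ∃ D : ℝ → ℝ, IsControlFunction d₁ (n₁ - 1) D)
    (hdim₂ : ∃ D : ℝ → ℝ, IsControlFunction d₂ n₂ D)
    (hnot₂ : ¬ ∃ D : ℝ → ℝ, IsControlFunction d₂ (n₂ - 1) D)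
    (hdimprod : ∃ D : ℝ → ℝ,
      IsControlFunction
        (fun p q : X₁ × X₂ => max (d₁ p.1 q.1) (d₂ p.2 q.2)) m D) :
    ∃ (Y₁ Y₂ : Type) (e₁ : Y₁ → Y₁ → ℝ) (e₂ : Y₂ → Y₂ → ℝ),
      IsMetric e₁ ∧ IsMetric e₂ ∧
      (∃ A B : ℝ, IsControlFunction e₁ n₁ (fun r => A * r + B)) ∧
      (¬ ∃ D : ℝ → ℝ, IsControlFunction e₁ (n₁ - 1) D) ∧
      (∃ A B : ℝ, IsControlFunction e₂ n₂ (fun r => A * r + B)) ∧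
      (¬ ∃ D : ℝ → ℝ, IsControlFunction e₂ (n₂ - 1) D) ∧
      (∃ A B : ℝ, IsControlFunction
        (fun p q : Y₁ × Y₂ => max (e₁ p.1 q.1) (e₂ p.2 q.2)) m
        (fun r => A * r + B)) := by
  obtain ⟨D₁, hD₁⟩ := hdim₁
  obtain ⟨D₂, hD₂⟩ := hdim₂
  obtain ⟨D₃, hD₃⟩ := hdimprod
  obtain ⟨r, hr_pos, hr, hDr⟩ :=
    exists_two_mul_le_and_le fun t => max (D₁ t) (max (D₂ t) (D₃ t))
  have h_mono := monotone_tame hr_pos hr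
  have h_unbdd := exists_lt_tame hr_pos hr
  have hD₃' := hD₃.tame_comp hr_pos hr fun k => (le_max_right _ _).trans <|
    (le_max_right _ _).trans (hDr k)
  simp only [h_mono.map_max] at hD₃'
  exact ⟨X₁, X₂, _, _, hmet₁.tame_comp hr_pos hr, hmet₂.tame_comp hr_pos hr,
    ⟨1, 3, hD₁.tame_comp hr_pos hr fun k => (le_max_left _ _).trans (hDr k)⟩,
    fun ⟨D, hD⟩ => hnot₁ (hD.of_comp h_mono h_unbdd),
    ⟨1, 3, hD₂.tame_comp hr_pos hr fun k =>
      (le_max_left _ _).trans <| (le_max_right _ _).trans (hDr k)⟩,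
    fun ⟨D, hD⟩ => hnot₂ (hD.of_comp h_mono h_unbdd), ⟨1, 3, hD₃'⟩⟩

theorem stmt_11 {X₁ X₂ : Type} (d₁ : X₁ → X₁ → ℝ) (d₂ : X₂ → X₂ → ℝ)
    (hmet₁ : IsMetric d₁) (hmet₂ : IsMetric d₂)
    (n₁ n₂ m : ℕ) (hm : m < n₁ + n₂)
    (hdim₁ : ∃ D : ℝ → ℝ, IsControlFunction d₁ n₁ D)
    (hnot₁ : ¬ ∃ D : ℝ → ℝ, IsControlFunction d₁ (n₁ - 1) D)
    (hdim₂ : ∃ D : ℝ → ℝ, IsControlFunction d₂ n₂ D)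
    (hnot₂ : ¬ ∃ D : ℝ → ℝ, IsControlFunction d₂ (n₂ - 1) D)
    (hdimprod : ∃ D : ℝ → ℝ,
      IsControlFunction
        (fun p q : X₁ × X₂ => max (d₁ p.1 q.1) (d₂ p.2 q.2)) m D) :
    ∃ (Y₁ Y₂ : Type) (e₁ : Y₁ → Y₁ → ℝ) (e₂ : Y₂ → Y₂ → ℝ),
      IsMetric e₁ ∧ IsMetric e₂ ∧
      (∃ A B : ℝ, IsControlFunction e₁ n₁ (fun r => A * r + B)) ∧
      (¬ ∃ D : ℝ → ℝ, IsControlFunction e₁ (n₁ - 1) D) ∧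
      (∃ A B : ℝ, IsControlFunction e₂ n₂ (fun r => A * r + B)) ∧
      (¬ ∃ D : ℝ → ℝ, IsControlFunction e₂ (n₂ - 1) D) ∧
      (∃ A B : ℝ, IsControlFunction
        (fun p q : Y₁ × Y₂ => max (e₁ p.1 q.1) (e₂ p.2 q.2)) m
        (fun r => A * r + B)) :=
  stmt_11_general d₁ d₂ hmet₁ hmet₂ n₁ n₂ m hdim₁ hnot₁ hdim₂ hnot₂ hdimprod
end

section
/- Let (X,d_X), (Y,d_Y) be metric spaces and f : X → Y a coarse equivalence: there exist nondecreasing unbounded functions φ, Φ : [0,∞) → [0,∞) with φ(d_X(x,x')) ≤ d_Y(f(x),f(x')) ≤ Φ(d_X(x,x')) for all x, x' ∈ X. Then there exist functions c_X, c_Y : [0,∞) → [0,∞), each concave, strictly increasing, continuous, unbounded, and vanishing exactly at 0, such that, with d_X' = c_X ∘ d_X and d_Y' = c_Y ∘ d_Y (which are metrics), for all x, x' ∈ X: d_X'(x,x') − 2 ≤ d_Y'(f(x), f(x')) ≤ d_X'(x,x') + 1; in particular f : (X,d_X') → (Y,d_Y') is a quasi-isometric embedding, indeed an isometry up to an additive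 constant. -/
/-!
Choose knots `0 = a 0 < a 1 < ⋯` on the domain side and `0 = b 0 < b 1 < ⋯` on the target
side, with nondecreasing gaps, such that `b n ≤ φ (a (n + 1))` and `Φ (a (n + 1)) ≤ b (n + 1)`.
The piecewise-linear functions `c_X`, `c_Y` with `c_X (a n) = c_Y (b n) = n` are concave because
the gaps grow, hence subadditive, so composed with a metric they give a metric. If
`a n ≤ d_X(x, x') < a (n + 1)`, then `c_X (d_X(x, x')) ∈ [n, n + 1]`, while the coarse bounds put
`d_Y(f x, f x')` between `b (n - 1)` and `b (n + 1)`, i.e. `c_Y` of it in `[n - 1, n + 1]`.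
-/

open Set

theorem ConcaveOn.map_add_le_s12 {f : ℝ → ℝ} (hf : ConcaveOn ℝ (Ici 0) f) (h0 : 0 ≤ f 0)
    {u v : ℝ} (hu : 0 ≤ u) (hv : 0 ≤ v) : f (u + v) ≤ f u + f v := by
  rcases (add_nonneg hu hv).eq_or_lt with huv | huv
  · obtain ⟨rfl, rfl⟩ : u = 0 ∧ v = 0 := ⟨by linarith, by linarith⟩
    simpa using h0
  have key : ∀ w, 0 ≤ w → w ≤ u + v → w / (u + v) * f (u + v) ≤ f w := by
    intro w hw hwuv
    have hq : w / (u + v) ≤ 1 := (div_le_one huv).mpr hwuv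
    have := hf.2 self_mem_Ici (mem_Ici.mpr huv.le) (sub_nonneg.mpr hq)
      (div_nonneg hw huv.le) (sub_add_cancel _ _)
    simp only [smul_eq_mul, mul_zero, zero_add, div_mul_cancel₀ w huv.ne'] at this
    nlinarith
  have hsum : u / (u + v) * f (u + v) + v / (u + v) * f (u + v) = f (u + v) := by
    rw [← add_mul, ← add_div, div_self huv.ne', one_mul]
  linarith [key u hu (by linarith), key v hv (by linarith)]

theorem isMetric_comp_dist_s12 {Z : Type*} [MetricSpace Z] {c : ℝ → ℝ}
    (hc_nonneg : ∀ r, 0 ≤ r → 0 ≤ c r) (hc_eq_zero : ∀ r, 0 ≤ r → (c r = 0 ↔ r = 0))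
    (hc_mono : MonotoneOn c (Ici 0))
    (hc_add : ∀ u v, 0 ≤ u → 0 ≤ v → c (u + v) ≤ c u + c v) :
    IsMetric fun z z' : Z => c (dist z z') := by
  refine ⟨fun x y => hc_nonneg _ dist_nonneg, fun x y => ?_, fun x y => congrArg c (dist_comm x y),
    fun x y z => ?_⟩
  · rw [hc_eq_zero _ dist_nonneg, dist_eq_zero]
  · calc c (dist x z) ≤ c (dist x y + dist y z) :=
          hc_mono dist_nonneg (add_nonneg dist_nonneg dist_nonneg) (dist_triangle x y z)
      _ ≤ c (dist x y) + c (dist y z) := hc_add _ _ dist_nonneg dist_nonneg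

structure IsKnotSeq (a : ℕ → ℝ) : Prop where
  zero : a 0 = 0
  one_le_one : 1 ≤ a 1
  gap_le_gap : ∀ n, a (n + 1) - a n ≤ a (n + 2) - a (n + 1)

noncomputable def knotLine (a : ℕ → ℝ) (n : ℕ) (t : ℝ) : ℝ :=
  n + (t - a n) / (a (n + 1) - a n)

/-- The piecewise-linear function with value `n` at `a n`, written as the infimum of the lines
through consecutive knots (for knots with growing gaps, this infimum is attained on each piece). -/
noncomputable def knotInterp (a : ℕ → ℝ) (t : ℝ) : ℝ :=
  ⨅ n, knotLine a n t

theorem knotLine_sub_knotLine (a : ℕ → ℝ) (n : ℕ) (s t : ℝ) :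
    knotLine a n t - knotLine a n s = (t - s) / (a (n + 1) - a n) := by
  unfold knotLine; ring

namespace IsKnotSeq

variable {a : ℕ → ℝ} (ha : IsKnotSeq a)
include ha

theorem gap_mono : Monotone fun n => a (n + 1) - a n :=
  monotone_nat_of_le_succ ha.gap_le_gap

theorem one_le_gap (n : ℕ) : 1 ≤ a (n + 1) - a n := by
  have h := ha.gap_mono n.zero_le
  simp only [zero_add, ha.zero, sub_zero] at h
  linarith [ha.one_le_one]

theorem gap_pos (n : ℕ) : 0 < a (n + 1) - a n :=
  one_pos.trans_le (ha.one_le_gap n)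

theorem monotone : Monotone a :=
  monotone_nat_of_le_succ fun n => by linarith [ha.one_le_gap n]

theorem nonneg (n : ℕ) : 0 ≤ a n :=
  ha.zero ▸ ha.monotone n.zero_le

theorem natCast_le (n : ℕ) : (n : ℝ) ≤ a n := by
  induction n with
  | zero => simp [ha.zero]
  | succ n ih => push_cast; linarith [ha.one_le_gap n]

theorem exists_mem_Ico {t : ℝ} (ht : 0 ≤ t) : ∃ m, t ∈ Ico (a m) (a (m + 1)) := by
  have hunb : ¬BddAbove (range a) := by
    rw [not_bddAbove_iff]
    intro x
    obtain ⟨n, hn⟩ := exists_nat_gt x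
    exact ⟨a n, mem_range_self n, hn.trans_le (ha.natCast_le n)⟩
  have hcover := iUnion_Ico_map_succ_eq_Ici (fun n => ha.monotone (Nat.zero_le n)) hunb
  simp only [Nat.bot_eq_zero, ha.zero, Order.succ_eq_add_one] at hcover
  have hmem : t ∈ ⋃ m, Ico (a m) (a (m + 1)) := hcover ▸ mem_Ici.mpr ht
  exact mem_iUnion.mp hmem

theorem knotLine_succ_sub_knotLine (k : ℕ) (t : ℝ) :
    knotLine a (k + 1) t - knotLine a k t =
      (t - a (k + 1)) * ((a (k + 2) - a (k + 1))⁻¹ - (a (k + 1) - a k)⁻¹) := by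
  have h₁ := (ha.gap_pos k).ne'
  have h₂ := (ha.gap_pos (k + 1)).ne'
  unfold knotLine
  field_simp
  push_cast
  ring

theorem inv_gap_succ_le (k : ℕ) : (a (k + 2) - a (k + 1))⁻¹ ≤ (a (k + 1) - a k)⁻¹ :=
  inv_anti₀ (ha.gap_pos k) (ha.gap_le_gap k)

theorem knotLine_le_knotLine {m : ℕ} {t : ℝ} (ht : t ∈ Icc (a m) (a (m + 1))) (n : ℕ) :
    knotLine a m t ≤ knotLine a n t := by
  rcases le_total m n with hmn | hnm
  · induction n, hmn using Nat.le_induction with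
    | base => rfl
    | succ k hmk ih =>
      have ht' : t ≤ a (k + 1) := ht.2.trans (ha.monotone (by omega))
      nlinarith [ha.knotLine_succ_sub_knotLine k t, ha.inv_gap_succ_le k]
  · induction hnm using Nat.decreasingInduction with
    | self => rfl
    | of_succ k hkm ih =>
      have ht' : a (k + 1) ≤ t := (ha.monotone hkm).trans ht.1
      nlinarith [ha.knotLine_succ_sub_knotLine k t, ha.inv_gap_succ_le k]

theorem bddBelow_range_knotLine {t : ℝ} (ht : 0 ≤ t) :
    BddBelow (range fun n => knotLine a n t) := by
  obtain ⟨m, hm⟩ := ha.exists_mem_Ico ht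
  exact ⟨knotLine a m t, forall_mem_range.mpr (ha.knotLine_le_knotLine (Ico_subset_Icc_self hm))⟩

theorem knotInterp_le_knotLine {t : ℝ} (ht : 0 ≤ t) (n : ℕ) : knotInterp a t ≤ knotLine a n t :=
  ciInf_le (ha.bddBelow_range_knotLine ht) n

theorem knotInterp_eq_knotLine {m : ℕ} {t : ℝ} (ht : t ∈ Icc (a m) (a (m + 1))) :
    knotInterp a t = knotLine a m t :=
  le_antisymm (ha.knotInterp_le_knotLine ((ha.nonneg m).trans ht.1) m)
    (le_ciInf (ha.knotLine_le_knotLine ht))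

theorem knotInterp_knot (m : ℕ) : knotInterp a (a m) = m := by
  rw [ha.knotInterp_eq_knotLine ⟨le_rfl, ha.monotone m.le_succ⟩, knotLine, sub_self, zero_div,
    add_zero]

theorem knotInterp_zero : knotInterp a 0 = 0 := by
  simpa [ha.zero] using ha.knotInterp_knot 0

theorem knotInterp_nonneg {t : ℝ} (ht : 0 ≤ t) : 0 ≤ knotInterp a t := by
  obtain ⟨m, hm⟩ := ha.exists_mem_Ico ht
  rw [ha.knotInterp_eq_knotLine (Ico_subset_Icc_self hm), knotLine]
  have hfrac := div_nonneg (sub_nonneg.mpr hm.1) (ha.gap_pos m).le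
  positivity

theorem strictMonoOn_knotInterp : StrictMonoOn (knotInterp a) (Ici 0) := by
  intro s hs t ht hst
  obtain ⟨m, hm⟩ := ha.exists_mem_Ico ht
  have hslope := knotLine_sub_knotLine a m s t
  have hpos : 0 < (t - s) / (a (m + 1) - a m) := div_pos (sub_pos.mpr hst) (ha.gap_pos m)
  calc knotInterp a s ≤ knotLine a m s := ha.knotInterp_le_knotLine hs m
    _ < knotLine a m t := by linarith
    _ = knotInterp a t := (ha.knotInterp_eq_knotLine (Ico_subset_Icc_self hm)).symm

theorem monotoneOn_knotInterp : MonotoneOn (knotInterp a) (Ici 0) :=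
  ha.strictMonoOn_knotInterp.monotoneOn

theorem knotInterp_eq_zero_iff {t : ℝ} (ht : 0 ≤ t) : knotInterp a t = 0 ↔ t = 0 := by
  refine ⟨fun h => ?_, fun h => h ▸ ha.knotInterp_zero⟩
  rw [← ha.knotInterp_zero] at h
  exact ha.strictMonoOn_knotInterp.injOn ht self_mem_Ici h

theorem concaveOn_knotInterp : ConcaveOn ℝ (Ici 0) (knotInterp a) := by
  refine ⟨convex_Ici 0, fun x hx y hy p q hp hq hpq => le_ciInf fun n => ?_⟩
  have hline : knotLine a n (p * x + q * y) = p * knotLine a n x + q * knotLine a n y := by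
    unfold knotLine
    linear_combination (a n / (a (n + 1) - a n) - n) * hpq
  simp only [smul_eq_mul, hline]
  gcongr
  · exact ha.knotInterp_le_knotLine hx n
  · exact ha.knotInterp_le_knotLine hy n

/-- Every supporting line has slope at most `1`, since all gaps are at least `1`. -/
theorem lipschitzOnWith_knotInterp : LipschitzOnWith 1 (knotInterp a) (Ici 0) := by
  refine LipschitzOnWith.of_le_add fun s hs t ht => ?_
  suffices knotInterp a s - dist s t ≤ knotInterp a t by linarith
  refine le_ciInf fun n => ?_
  have hslope : |knotLine a n s - knotLine a n t| ≤ |s - t| := by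
    rw [knotLine_sub_knotLine, abs_div, abs_of_pos (ha.gap_pos n)]
    exact div_le_self (abs_nonneg _) (ha.one_le_gap n)
  rw [Real.dist_eq]
  linarith [ha.knotInterp_le_knotLine hs n, le_abs_self (knotLine a n s - knotLine a n t)]

theorem continuousOn_knotInterp : ContinuousOn (knotInterp a) (Ici 0) :=
  ha.lipschitzOnWith_knotInterp.continuousOn

theorem exists_le_knotInterp (M : ℝ) : ∃ r, 0 ≤ r ∧ M ≤ knotInterp a r :=
  ⟨a ⌈M⌉₊, ha.nonneg _, (ha.knotInterp_knot _).symm ▸ Nat.le_ceil M⟩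

theorem natCast_le_knotInterp {m : ℕ} {t : ℝ} (ht : a m ≤ t) : (m : ℝ) ≤ knotInterp a t :=
  ha.knotInterp_knot m ▸ ha.monotoneOn_knotInterp (ha.nonneg m) ((ha.nonneg m).trans ht) ht

theorem knotInterp_le_natCast {m : ℕ} {t : ℝ} (ht₀ : 0 ≤ t) (ht : t ≤ a m) :
    knotInterp a t ≤ m :=
  ha.knotInterp_knot m ▸ ha.monotoneOn_knotInterp ht₀ (ha.nonneg m) ht

theorem isMetric {Z : Type*} [MetricSpace Z] :
    IsMetric fun z z' : Z => knotInterp a (dist z z') :=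
  isMetric_comp_dist_s12 (fun _ => ha.knotInterp_nonneg) (fun _ => ha.knotInterp_eq_zero_iff)
    ha.monotoneOn_knotInterp fun _ _ hu hv =>
      ha.concaveOn_knotInterp.map_add_le_s12 ha.knotInterp_zero.ge hu hv

end IsKnotSeq

section Coupling

variable {a b : ℕ → ℝ} (ha : IsKnotSeq a) (hb : IsKnotSeq b) {φ Φ : ℝ → ℝ} {s t : ℝ}
  (hs : 0 ≤ s) (ht : 0 ≤ t)

include ha hb hs ht

theorem knotInterp_le_knotInterp_add_one (hhigh : ∀ n, Φ (a (n + 1)) ≤ b (n + 1))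
    (hΦ : MonotoneOn Φ (Ici 0)) (hts : t ≤ Φ s) : knotInterp b t ≤ knotInterp a s + 1 := by
  obtain ⟨m, hm⟩ := ha.exists_mem_Ico hs
  have htb : t ≤ b (m + 1) := hts.trans <|
    (hΦ hs (ha.nonneg _) hm.2.le).trans (hhigh m)
  have hbt := hb.knotInterp_le_natCast ht htb
  have has := ha.natCast_le_knotInterp hm.1
  push_cast at hbt
  linarith

theorem knotInterp_sub_two_le_knotInterp (hlow : ∀ n, b n ≤ φ (a (n + 1)))
    (hφ : MonotoneOn φ (Ici 0)) (hst : φ s ≤ t) : knotInterp a s - 2 ≤ knotInterp b t := by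
  obtain ⟨m, hm⟩ := ha.exists_mem_Ico hs
  have has := ha.knotInterp_le_natCast hs hm.2.le
  cases m with
  | zero =>
    push_cast at has
    linarith [hb.knotInterp_nonneg ht]
  | succ k =>
    have hbt : b k ≤ t := (hlow k).trans <| (hφ (ha.nonneg _) hs hm.1).trans hst
    have hkt := hb.natCast_le_knotInterp hbt
    push_cast at has
    linarith

end Coupling

/-- Domain knots `a n` and target knots `b n`, built alternately. `ψ M` stands for a point with
`M ≤ φ (ψ M)`, which for monotone `φ` gives `b n ≤ φ (a (n + 1))`; each new knot at least repeats
the previous gap. -/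
noncomputable def coupledKnots (ψ Φ : ℝ → ℝ) : ℕ → ℝ × ℝ
  | 0 => (0, 0)
  | 1 => (max 1 (ψ 0), max 1 (Φ (max 1 (ψ 0))))
  | n + 2 =>
    let a := max (2 * (coupledKnots ψ Φ (n + 1)).1 - (coupledKnots ψ Φ n).1)
      (ψ (coupledKnots ψ Φ (n + 1)).2)
    (a, max (2 * (coupledKnots ψ Φ (n + 1)).2 - (coupledKnots ψ Φ n).2) (Φ a))

section coupledKnots

variable (ψ Φ : ℝ → ℝ)

theorem isKnotSeq_coupledKnots_fst : IsKnotSeq fun n => (coupledKnots ψ Φ n).1 where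
  zero := rfl
  one_le_one := le_max_left _ _
  gap_le_gap n := by
    have : 2 * (coupledKnots ψ Φ (n + 1)).1 - (coupledKnots ψ Φ n).1 ≤
        (coupledKnots ψ Φ (n + 2)).1 := le_max_left _ _
    linarith

theorem isKnotSeq_coupledKnots_snd : IsKnotSeq fun n => (coupledKnots ψ Φ n).2 where
  zero := rfl
  one_le_one := le_max_left _ _
  gap_le_gap n := by
    have : 2 * (coupledKnots ψ Φ (n + 1)).2 - (coupledKnots ψ Φ n).2 ≤
        (coupledKnots ψ Φ (n + 2)).2 := le_max_left _ _
    linarith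

theorem le_coupledKnots_fst_succ (n : ℕ) :
    ψ (coupledKnots ψ Φ n).2 ≤ (coupledKnots ψ Φ (n + 1)).1 := by
  cases n with
  | zero => exact le_max_right _ _
  | succ n => exact le_max_right _ _

theorem le_coupledKnots_snd_succ (n : ℕ) :
    Φ (coupledKnots ψ Φ (n + 1)).1 ≤ (coupledKnots ψ Φ (n + 1)).2 := by
  cases n with
  | zero => exact le_max_right _ _
  | succ n => exact le_max_right _ _

end coupledKnots

theorem exists_coupled_isKnotSeq {φ : ℝ → ℝ} (hφ : MonotoneOn φ (Ici 0))
    (hφ_unbounded : ∀ M : ℝ, ∃ r, 0 ≤ r ∧ M ≤ φ r) (Φ : ℝ → ℝ) :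
    ∃ a b : ℕ → ℝ, IsKnotSeq a ∧ IsKnotSeq b ∧
      (∀ n, b n ≤ φ (a (n + 1))) ∧ ∀ n, Φ (a (n + 1)) ≤ b (n + 1) := by
  choose ψ hψ_nonneg hψ using hφ_unbounded
  have ha := isKnotSeq_coupledKnots_fst ψ Φ
  refine ⟨_, _, ha, isKnotSeq_coupledKnots_snd ψ Φ, fun n => ?_,
    le_coupledKnots_snd_succ ψ Φ⟩
  exact (hψ _).trans (hφ (hψ_nonneg _) (ha.nonneg _) (le_coupledKnots_fst_succ ψ Φ n))

theorem stmt_12_general (X Y : Type*) [MetricSpace X] [MetricSpace Y] (f : X → Y)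
    (φ Φ : ℝ → ℝ)
    (hφmono : MonotoneOn φ (Set.Ici (0 : ℝ)))
    (hφunb : ∀ M : ℝ, ∃ r, 0 ≤ r ∧ M ≤ φ r)
    (hΦmono : MonotoneOn Φ (Set.Ici (0 : ℝ)))
    (hcoarse : ∀ x x' : X,
      φ (dist x x') ≤ dist (f x) (f x') ∧ dist (f x) (f x') ≤ Φ (dist x x')) :
    ∃ cX cY : ℝ → ℝ,
      (∀ r, 0 ≤ r → 0 ≤ cX r) ∧ ConcaveOn ℝ (Set.Ici (0 : ℝ)) cX ∧
        StrictMonoOn cX (Set.Ici (0 : ℝ)) ∧ ContinuousOn cX (Set.Ici (0 : ℝ)) ∧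
        (∀ M : ℝ, ∃ r, 0 ≤ r ∧ M ≤ cX r) ∧
        (∀ r, 0 ≤ r → (cX r = 0 ↔ r = 0)) ∧
      (∀ r, 0 ≤ r → 0 ≤ cY r) ∧ ConcaveOn ℝ (Set.Ici (0 : ℝ)) cY ∧
        StrictMonoOn cY (Set.Ici (0 : ℝ)) ∧ ContinuousOn cY (Set.Ici (0 : ℝ)) ∧
        (∀ M : ℝ, ∃ r, 0 ≤ r ∧ M ≤ cY r) ∧
        (∀ r, 0 ≤ r → (cY r = 0 ↔ r = 0)) ∧
      IsMetric (fun x x' : X => cX (dist x x')) ∧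
      IsMetric (fun y y' : Y => cY (dist y y')) ∧
      (∀ x x' : X,
        cX (dist x x') - 2 ≤ cY (dist (f x) (f x')) ∧
        cY (dist (f x) (f x')) ≤ cX (dist x x') + 1) := by
  obtain ⟨a, b, ha, hb, hlow, hhigh⟩ := exists_coupled_isKnotSeq hφmono hφunb Φ
  refine ⟨knotInterp a, knotInterp b,
    fun _ => ha.knotInterp_nonneg, ha.concaveOn_knotInterp, ha.strictMonoOn_knotInterp,
    ha.continuousOn_knotInterp, ha.exists_le_knotInterp, fun _ => ha.knotInterp_eq_zero_iff,
    fun _ => hb.knotInterp_nonneg, hb.concaveOn_knotInterp, hb.strictMonoOn_knotInterp,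
    hb.continuousOn_knotInterp, hb.exists_le_knotInterp, fun _ => hb.knotInterp_eq_zero_iff,
    ha.isMetric, hb.isMetric, fun x x' => ⟨?_, ?_⟩⟩
  · exact knotInterp_sub_two_le_knotInterp ha hb dist_nonneg dist_nonneg hlow hφmono
      (hcoarse x x').1
  · exact knotInterp_le_knotInterp_add_one ha hb dist_nonneg dist_nonneg hhigh hΦmono
      (hcoarse x x').2

theorem stmt_12 (X Y : Type*) [MetricSpace X] [MetricSpace Y] (f : X → Y)
    (φ Φ : ℝ → ℝ)
    (hφ0 : ∀ r, 0 ≤ r → 0 ≤ φ r) (hφmono : MonotoneOn φ (Set.Ici (0 : ℝ)))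
    (hφunb : ∀ M : ℝ, ∃ r, 0 ≤ r ∧ M ≤ φ r)
    (hΦ0 : ∀ r, 0 ≤ r → 0 ≤ Φ r) (hΦmono : MonotoneOn Φ (Set.Ici (0 : ℝ)))
    (hΦunb : ∀ M : ℝ, ∃ r, 0 ≤ r ∧ M ≤ Φ r)
    (hcoarse : ∀ x x' : X,
      φ (dist x x') ≤ dist (f x) (f x') ∧ dist (f x) (f x') ≤ Φ (dist x x')) :
    ∃ cX cY : ℝ → ℝ,
      (∀ r, 0 ≤ r → 0 ≤ cX r) ∧ ConcaveOn ℝ (Set.Ici (0 : ℝ)) cX ∧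
        StrictMonoOn cX (Set.Ici (0 : ℝ)) ∧ ContinuousOn cX (Set.Ici (0 : ℝ)) ∧
        (∀ M : ℝ, ∃ r, 0 ≤ r ∧ M ≤ cX r) ∧
        (∀ r, 0 ≤ r → (cX r = 0 ↔ r = 0)) ∧
      (∀ r, 0 ≤ r → 0 ≤ cY r) ∧ ConcaveOn ℝ (Set.Ici (0 : ℝ)) cY ∧
        StrictMonoOn cY (Set.Ici (0 : ℝ)) ∧ ContinuousOn cY (Set.Ici (0 : ℝ)) ∧
        (∀ M : ℝ, ∃ r, 0 ≤ r ∧ M ≤ cY r) ∧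
        (∀ r, 0 ≤ r → (cY r = 0 ↔ r = 0)) ∧
      IsMetric (fun x x' : X => cX (dist x x')) ∧
      IsMetric (fun y y' : Y => cY (dist y y')) ∧
      (∀ x x' : X,
        cX (dist x x') - 2 ≤ cY (dist (f x) (f x')) ∧
        cY (dist (f x) (f x')) ≤ cX (dist x x') + 1) :=
  stmt_12_general X Y f φ Φ hφmono hφunb hΦmono hcoarse
end

section
/- Let (X,d_X), (Y,d_Y) be metric spaces and f : X → Y a coarse equivalence: there exist nondecreasing unbounded functions φ, Φ : [0,∞) → [0,∞) with φ(d_X(x,x')) ≤ d_Y(f(x),f(x')) ≤ Φ(d_X(x,x')) for all x, x' ∈ X. Then for every ε > 0 there exist functions c_X, c_Y : [0,∞) → [0,∞), each concave, strictly increasing, continuous, unbounded, and vanishing exactly at 0, such that, with d_X' = c_X ∘ d_X and d_Y' = c_Y ∘ d_Y (which are metrics), for all x, x' ∈ X: |d_Y'(f(x), f(x')) − d_X'(x,x')| ≤ ε. -/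
/-!
Choose convex node sequences `0 = A 0 < A 1 < ⋯` and `0 = B 0 < B 1 < ⋯` that interlace
the control functions: `Φ (A n) ≤ B (n + 1)` and `B n ≤ φ (A (n + 1))`. Let `cX`, `cY` be the
piecewise-linear functions taking the value `n * ε / 2` at `A n`, resp. `B n`. Convexity of the
nodes makes them concave, and a concave increasing `c` with `c 0 = 0` is subadditive, so `c ∘ d`
is again a metric. If `A n ≤ d x x' ≤ A (n + 1)`, then `cX (d x x')` lies in
`[n, n + 1] * ε / 2`, while `B (n - 1) ≤ d (f x) (f x') ≤ B (n + 2)` puts `cY (d (f x) (f x'))`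
in `[n - 1, n + 2] * ε / 2`.
-/

open Set

structure IsConcaveRescaling (c : ℝ → ℝ) : Prop where
  concaveOn : ConcaveOn ℝ (Ici 0) c
  strictMonoOn : StrictMonoOn c (Ici 0)
  continuousOn : ContinuousOn c (Ici 0)
  unbounded : ∀ M : ℝ, ∃ r, 0 ≤ r ∧ M ≤ c r
  map_zero : c 0 = 0

namespace IsConcaveRescaling

variable {c : ℝ → ℝ}

theorem nonneg (hc : IsConcaveRescaling c) {r : ℝ} (hr : 0 ≤ r) : 0 ≤ c r :=
  hc.map_zero ▸ hc.strictMonoOn.monotoneOn self_mem_Ici hr hr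

theorem eq_zero_iff (hc : IsConcaveRescaling c) {r : ℝ} (hr : 0 ≤ r) : c r = 0 ↔ r = 0 :=
  ⟨fun h => hc.strictMonoOn.injOn hr self_mem_Ici (h.trans hc.map_zero.symm),
    fun h => h ▸ hc.map_zero⟩

theorem map_add_le (hc : IsConcaveRescaling c) {s t : ℝ} (hs : 0 ≤ s) (ht : 0 ≤ t) :
    c (s + t) ≤ c s + c t := by
  rcases (add_nonneg hs ht).eq_or_lt with hst | hst
  · obtain ⟨rfl, rfl⟩ := (add_eq_zero_iff_of_nonneg hs ht).1 hst.symm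
    simp only [add_zero, hc.map_zero, le_refl]
  have hscale : ∀ u, 0 ≤ u → u ≤ s + t → u / (s + t) * c (s + t) ≤ c u := by
    intro u hu hus
    have h := hc.concaveOn.2 (mem_Ici.2 hst.le) self_mem_Ici (div_nonneg hu hst.le)
      (sub_nonneg.2 ((div_le_one hst).2 hus)) (add_sub_cancel _ _)
    simpa only [smul_eq_mul, mul_zero, add_zero, hc.map_zero, div_mul_cancel₀ u hst.ne'] using h
  have hsum : s / (s + t) * c (s + t) + t / (s + t) * c (s + t) = c (s + t) := by
    field_simp
  linarith [hscale s hs (by linarith), hscale t ht (by linarith)]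

theorem isMetric_comp {Z : Type*} [MetricSpace Z] (hc : IsConcaveRescaling c) :
    IsMetric fun z z' : Z => c (dist z z') := by
  refine ⟨fun x y => hc.nonneg dist_nonneg, fun x y => ?_, fun x y => congrArg c (dist_comm x y),
    fun x y z => ?_⟩
  · rw [hc.eq_zero_iff dist_nonneg, dist_eq_zero]
  · calc c (dist x z) ≤ c (dist x y + dist y z) :=
          hc.strictMonoOn.monotoneOn dist_nonneg (add_nonneg dist_nonneg dist_nonneg)
            (dist_triangle x y z)
      _ ≤ c (dist x y) + c (dist y z) := hc.map_add_le dist_nonneg dist_nonneg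

theorem const_mul (hc : IsConcaveRescaling c) {k : ℝ} (hk : 0 < k) :
    IsConcaveRescaling fun r => k * c r where
  concaveOn := hc.concaveOn.smul hk.le
  strictMonoOn _ hx _ hy hxy := mul_lt_mul_of_pos_left (hc.strictMonoOn hx hy hxy) hk
  continuousOn := continuousOn_const.mul hc.continuousOn
  unbounded M := by
    obtain ⟨r, hr, hM⟩ := hc.unbounded (M / k)
    exact ⟨r, hr, (div_le_iff₀' hk).1 hM⟩
  map_zero := by rw [hc.map_zero, mul_zero]

end IsConcaveRescaling

structure ConvexNodes (a : ℕ → ℝ) : Prop where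
  map_zero : a 0 = 0
  pos_one : 0 < a 1
  gap_le : ∀ n, a (n + 1) - a n ≤ a (n + 2) - a (n + 1)

noncomputable def nodeChord (a : ℕ → ℝ) (n : ℕ) (t : ℝ) : ℝ :=
  n + (t - a n) / (a (n + 1) - a n)

/-- For `ConvexNodes a` this is the piecewise-linear function taking the value `n` at `a n`:
the slopes of the chords decrease, so their infimum is the chord of the current interval. -/
noncomputable def nodeInterp (a : ℕ → ℝ) (t : ℝ) : ℝ :=
  ⨅ n, nodeChord a n t

theorem nodeChord_self (a : ℕ → ℝ) (n : ℕ) : nodeChord a n (a n) = n := by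
  rw [nodeChord, sub_self, zero_div, add_zero]

theorem nodeChord_affine (a : ℕ → ℝ) (n : ℕ) {p q : ℝ} (hpq : p + q = 1) (x y : ℝ) :
    nodeChord a n (p * x + q * y) = p * nodeChord a n x + q * nodeChord a n y := by
  simp only [nodeChord, div_eq_mul_inv]
  linear_combination (n - a n * (a (n + 1) - a n)⁻¹) * hpq.symm

namespace ConvexNodes

variable {a : ℕ → ℝ}

theorem gap_mono (ha : ConvexNodes a) : Monotone fun n => a (n + 1) - a n :=
  monotone_nat_of_le_succ ha.gap_le

theorem le_gap (ha : ConvexNodes a) (n : ℕ) : a 1 ≤ a (n + 1) - a n := by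
  simpa [ha.map_zero] using ha.gap_mono n.zero_le

theorem gap_pos (ha : ConvexNodes a) (n : ℕ) : 0 < a (n + 1) - a n :=
  ha.pos_one.trans_le (ha.le_gap n)

theorem mul_gap_le_sub (ha : ConvexNodes a) (m k : ℕ) :
    ((k : ℝ) - m) * (a (m + 1) - a m) ≤ a k - a m := by
  rcases le_total m k with hmk | hkm
  · obtain ⟨j, rfl⟩ := Nat.exists_eq_add_of_le hmk
    induction j with
    | zero => simp
    | succ j ih =>
      have hgap : a (m + 1) - a m ≤ a (m + j + 1) - a (m + j) := ha.gap_mono (m.le_add_right j)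
      rw [← add_assoc]
      push_cast at ih ⊢
      linarith [ih (m.le_add_right j)]
  · obtain ⟨j, rfl⟩ := Nat.exists_eq_add_of_le hkm
    induction j with
    | zero => simp
    | succ j ih =>
      have hgap : a (k + j + 1) - a (k + j) ≤ a (k + j + 2) - a (k + j + 1) := ha.gap_le (k + j)
      have hj : (0 : ℝ) ≤ j := j.cast_nonneg
      rw [← add_assoc]
      push_cast at ih ⊢
      nlinarith [ih (k.le_add_right j)]

theorem natCast_mul_le (ha : ConvexNodes a) (n : ℕ) : n * a 1 ≤ a n := by
  simpa [ha.map_zero] using ha.mul_gap_le_sub 0 n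

theorem nonneg (ha : ConvexNodes a) (n : ℕ) : 0 ≤ a n :=
  (mul_nonneg n.cast_nonneg ha.pos_one.le).trans (ha.natCast_mul_le n)

theorem exists_gt (ha : ConvexNodes a) (t : ℝ) : ∃ n, t < a n := by
  obtain ⟨n, hn⟩ := exists_nat_gt (t / a 1)
  exact ⟨n, ((div_lt_iff₀ ha.pos_one).1 hn).trans_le (ha.natCast_mul_le n)⟩

theorem exists_mem_Icc (ha : ConvexNodes a) {t : ℝ} (ht : 0 ≤ t) :
    ∃ n, a n ≤ t ∧ t ≤ a (n + 1) := by
  by_contra! h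
  have hle : ∀ n, a n ≤ t := fun n =>
    Nat.rec (ha.map_zero ▸ ht) (fun n ih => (h n ih).le) n
  obtain ⟨n, hn⟩ := ha.exists_gt t
  exact (hle n).not_gt hn

theorem le_nodeChord (ha : ConvexNodes a) (m k : ℕ) : (k : ℝ) ≤ nodeChord a m (a k) := by
  rw [nodeChord, ← sub_le_iff_le_add', le_div_iff₀ (ha.gap_pos m)]
  exact ha.mul_gap_le_sub m k

theorem nodeChord_le_nodeChord (ha : ConvexNodes a) {n : ℕ} {t : ℝ} (h₁ : a n ≤ t)
    (h₂ : t ≤ a (n + 1)) (m : ℕ) : nodeChord a n t ≤ nodeChord a m t := by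
  set θ := (t - a n) / (a (n + 1) - a n)
  have hgap := (ha.gap_pos n).ne'
  have hθ₀ : 0 ≤ θ := div_nonneg (sub_nonneg.2 h₁) (ha.gap_pos n).le
  have hθ₁ : θ ≤ 1 := (div_le_one (ha.gap_pos n)).2 (by linarith)
  have ht : t = (1 - θ) * a n + θ * a (n + 1) := by
    simp only [θ]; field_simp; ring
  calc nodeChord a n t = (1 - θ) * n + θ * ↑(n + 1) := by
        rw [nodeChord]; push_cast; ring
    _ ≤ (1 - θ) * nodeChord a m (a n) + θ * nodeChord a m (a (n + 1)) :=
        add_le_add (mul_le_mul_of_nonneg_left (ha.le_nodeChord m n) (by linarith))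
          (mul_le_mul_of_nonneg_left (ha.le_nodeChord m (n + 1)) hθ₀)
    _ = nodeChord a m t := by rw [ht, nodeChord_affine a m (sub_add_cancel 1 θ)]

theorem nodeInterp_eq_nodeChord (ha : ConvexNodes a) {n : ℕ} {t : ℝ} (h₁ : a n ≤ t)
    (h₂ : t ≤ a (n + 1)) : nodeInterp a t = nodeChord a n t :=
  IsGLB.ciInf_eq <| IsLeast.isGLB
    ⟨⟨n, rfl⟩, by rintro _ ⟨m, rfl⟩; exact ha.nodeChord_le_nodeChord h₁ h₂ m⟩

theorem isLeast_nodeInterp (ha : ConvexNodes a) {t : ℝ} (ht : 0 ≤ t) :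
    IsLeast (range fun m => nodeChord a m t) (nodeInterp a t) := by
  obtain ⟨n, h₁, h₂⟩ := ha.exists_mem_Icc ht
  rw [ha.nodeInterp_eq_nodeChord h₁ h₂]
  exact ⟨⟨n, rfl⟩, by rintro _ ⟨m, rfl⟩; exact ha.nodeChord_le_nodeChord h₁ h₂ m⟩

theorem nodeInterp_node (ha : ConvexNodes a) (n : ℕ) : nodeInterp a (a n) = n := by
  rw [ha.nodeInterp_eq_nodeChord le_rfl (sub_pos.1 (ha.gap_pos n)).le, nodeChord_self]

theorem nodeChord_le_add (ha : ConvexNodes a) (n : ℕ) (s t : ℝ) :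
    nodeChord a n t ≤ nodeChord a n s + (a 1)⁻¹ * dist t s := by
  have hslope : (a (n + 1) - a n)⁻¹ ≤ (a 1)⁻¹ := inv_anti₀ ha.pos_one (ha.le_gap n)
  have hdist : (t - s) * (a (n + 1) - a n)⁻¹ ≤ dist t s * (a 1)⁻¹ :=
    mul_le_mul (le_abs_self _) hslope (inv_nonneg.2 (ha.gap_pos n).le) dist_nonneg
  simp only [nodeChord, div_eq_mul_inv]
  linarith

theorem isConcaveRescaling_nodeInterp (ha : ConvexNodes a) :
    IsConcaveRescaling (nodeInterp a) where
  concaveOn := by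
    refine ⟨convex_Ici 0, fun x hx y hy p q hp hq hpq => ?_⟩
    have hxy : (0 : ℝ) ≤ p * x + q * y := add_nonneg (mul_nonneg hp hx) (mul_nonneg hq hy)
    obtain ⟨⟨n, hn⟩, -⟩ := ha.isLeast_nodeInterp hxy
    simp only [smul_eq_mul, ← hn, nodeChord_affine a n hpq]
    exact add_le_add (mul_le_mul_of_nonneg_left ((ha.isLeast_nodeInterp hx).2 ⟨n, rfl⟩) hp)
      (mul_le_mul_of_nonneg_left ((ha.isLeast_nodeInterp hy).2 ⟨n, rfl⟩) hq)
  strictMonoOn s hs t ht hst := by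
    obtain ⟨⟨n, hn⟩, -⟩ := ha.isLeast_nodeInterp ht
    calc nodeInterp a s ≤ nodeChord a n s := (ha.isLeast_nodeInterp hs).2 ⟨n, rfl⟩
      _ < nodeChord a n t := by
        simp only [nodeChord]
        gcongr
        exact ha.gap_pos n
      _ = nodeInterp a t := hn
  continuousOn := by
    refine (LipschitzOnWith.of_le_add_mul' (a 1)⁻¹ fun t ht s hs => ?_).continuousOn
    obtain ⟨⟨n, hn⟩, -⟩ := ha.isLeast_nodeInterp hs
    calc nodeInterp a t ≤ nodeChord a n t := (ha.isLeast_nodeInterp ht).2 ⟨n, rfl⟩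
      _ ≤ nodeChord a n s + (a 1)⁻¹ * dist t s := ha.nodeChord_le_add n s t
      _ = nodeInterp a s + (a 1)⁻¹ * dist t s := by rw [← hn]
  unbounded M := by
    obtain ⟨n, hn⟩ := exists_nat_ge M
    exact ⟨a n, ha.nonneg n, (ha.nodeInterp_node n).symm ▸ hn⟩
  map_zero := by simpa [ha.map_zero] using ha.nodeInterp_node 0

theorem le_nodeInterp (ha : ConvexNodes a) {n : ℕ} {t : ℝ} (h : a n ≤ t) :
    (n : ℝ) ≤ nodeInterp a t :=
  ha.nodeInterp_node n ▸ ha.isConcaveRescaling_nodeInterp.strictMonoOn.monotoneOn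
    (ha.nonneg n) ((ha.nonneg n).trans h) h

theorem nodeInterp_le (ha : ConvexNodes a) {n : ℕ} {t : ℝ} (ht : 0 ≤ t) (h : t ≤ a n) :
    nodeInterp a t ≤ n :=
  ha.nodeInterp_node n ▸
    ha.isConcaveRescaling_nodeInterp.strictMonoOn.monotoneOn ht (ha.nonneg n) h

theorem abs_nodeInterp_sub_nodeInterp_le {A B : ℕ → ℝ} (hA : ConvexNodes A)
    (hB : ConvexNodes B) {s t : ℝ} (hs : 0 ≤ s) (ht : 0 ≤ t)
    (hup : ∀ n, s ≤ A (n + 1) → t ≤ B (n + 2))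
    (hdown : ∀ n, A (n + 1) ≤ s → B n ≤ t) : |nodeInterp B t - nodeInterp A s| ≤ 2 := by
  obtain ⟨n, h₁, h₂⟩ := hA.exists_mem_Icc hs
  have hs₁ : (n : ℝ) ≤ nodeInterp A s := hA.le_nodeInterp h₁
  have hs₂ : nodeInterp A s ≤ ↑(n + 1) := hA.nodeInterp_le hs h₂
  have ht₂ : nodeInterp B t ≤ ↑(n + 2) := hB.nodeInterp_le ht (hup n h₂)
  have ht₁ : (n : ℝ) - 1 ≤ nodeInterp B t := by
    cases n with
    | zero => linarith [Nat.cast_zero (R := ℝ), hB.isConcaveRescaling_nodeInterp.nonneg ht]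
    | succ m => simpa using hB.le_nodeInterp (hdown m h₁)
  push_cast at hs₂ ht₂
  rw [abs_le]
  constructor <;> linarith

end ConvexNodes

/-- The second arguments of the `max`es keep both sequences convex. -/
noncomputable def interlacedNodes (u v : ℝ → ℝ) : ℕ → ℝ × ℝ
  | 0 => (0, 0)
  | 1 => (max (u 0) 1, max (v 0) 1)
  | n + 2 =>
    (max (u (interlacedNodes u v (n + 1)).2)
        (2 * (interlacedNodes u v (n + 1)).1 - (interlacedNodes u v n).1),
      max (v (interlacedNodes u v (n + 1)).1)
        (2 * (interlacedNodes u v (n + 1)).2 - (interlacedNodes u v n).2))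

theorem exists_convexNodes_interlaced (u v : ℝ → ℝ) :
    ∃ A B : ℕ → ℝ, ConvexNodes A ∧ ConvexNodes B ∧
      ∀ n, u (B n) ≤ A (n + 1) ∧ v (A n) ≤ B (n + 1) := by
  refine ⟨fun n => (interlacedNodes u v n).1, fun n => (interlacedNodes u v n).2,
    ⟨rfl, lt_max_of_lt_right one_pos, fun n => ?_⟩,
    ⟨rfl, lt_max_of_lt_right one_pos, fun n => ?_⟩, fun n => ?_⟩
  · have h : 2 * (interlacedNodes u v (n + 1)).1 - (interlacedNodes u v n).1 ≤
        (interlacedNodes u v (n + 2)).1 := le_max_right _ _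
    linarith
  · have h : 2 * (interlacedNodes u v (n + 1)).2 - (interlacedNodes u v n).2 ≤
        (interlacedNodes u v (n + 2)).2 := le_max_right _ _
    linarith
  · cases n with
    | zero => exact ⟨le_max_left _ _, le_max_left _ _⟩
    | succ n => exact ⟨le_max_left _ _, le_max_left _ _⟩

theorem stmt_13_general (X Y : Type*) [MetricSpace X] [MetricSpace Y] (f : X → Y)
    (φ Φ : ℝ → ℝ)
    (hφmono : MonotoneOn φ (Set.Ici (0 : ℝ)))
    (hφunb : ∀ M : ℝ, ∃ r, 0 ≤ r ∧ M ≤ φ r)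
    (hΦmono : MonotoneOn Φ (Set.Ici (0 : ℝ)))
    (hcoarse : ∀ x x' : X,
      φ (dist x x') ≤ dist (f x) (f x') ∧ dist (f x) (f x') ≤ Φ (dist x x')) :
    ∀ ε > (0 : ℝ), ∃ cX cY : ℝ → ℝ,
      (∀ r, 0 ≤ r → 0 ≤ cX r) ∧ ConcaveOn ℝ (Set.Ici (0 : ℝ)) cX ∧
        StrictMonoOn cX (Set.Ici (0 : ℝ)) ∧ ContinuousOn cX (Set.Ici (0 : ℝ)) ∧
        (∀ M : ℝ, ∃ r, 0 ≤ r ∧ M ≤ cX r) ∧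
        (∀ r, 0 ≤ r → (cX r = 0 ↔ r = 0)) ∧
      (∀ r, 0 ≤ r → 0 ≤ cY r) ∧ ConcaveOn ℝ (Set.Ici (0 : ℝ)) cY ∧
        StrictMonoOn cY (Set.Ici (0 : ℝ)) ∧ ContinuousOn cY (Set.Ici (0 : ℝ)) ∧
        (∀ M : ℝ, ∃ r, 0 ≤ r ∧ M ≤ cY r) ∧
        (∀ r, 0 ≤ r → (cY r = 0 ↔ r = 0)) ∧
      IsMetric (fun x x' : X => cX (dist x x')) ∧
      IsMetric (fun y y' : Y => cY (dist y y')) ∧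
      (∀ x x' : X, |cY (dist (f x) (f x')) - cX (dist x x')| ≤ ε) := by
  intro ε hε
  choose g hg₀ hgφ using hφunb
  obtain ⟨A, B, hA, hB, hAB⟩ := exists_convexNodes_interlaced g Φ
  have hcX := hA.isConcaveRescaling_nodeInterp.const_mul (half_pos hε)
  have hcY := hB.isConcaveRescaling_nodeInterp.const_mul (half_pos hε)
  refine ⟨_, _, fun r => hcX.nonneg, hcX.concaveOn, hcX.strictMonoOn, hcX.continuousOn,
    hcX.unbounded, fun r => hcX.eq_zero_iff, fun r => hcY.nonneg, hcY.concaveOn,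
    hcY.strictMonoOn, hcY.continuousOn, hcY.unbounded, fun r => hcY.eq_zero_iff,
    hcX.isMetric_comp, hcY.isMetric_comp, fun x x' => ?_⟩
  have hA₀ (n : ℕ) : A n ∈ Ici 0 := hA.nonneg n
  have hladder := hA.abs_nodeInterp_sub_nodeInterp_le hB dist_nonneg dist_nonneg
    (fun n hs => (hcoarse x x').2.trans ((hΦmono dist_nonneg (hA₀ _) hs).trans (hAB (n + 1)).2))
    (fun n hs => (hgφ (B n)).trans
      ((hφmono (hg₀ _) (hA₀ _) (hAB n).1).trans ((hφmono (hA₀ _) dist_nonneg hs).trans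
        (hcoarse x x').1)))
  calc |ε / 2 * nodeInterp B (dist (f x) (f x')) - ε / 2 * nodeInterp A (dist x x')|
      = ε / 2 * |nodeInterp B (dist (f x) (f x')) - nodeInterp A (dist x x')| := by
        rw [← mul_sub, abs_mul, abs_of_pos (half_pos hε)]
    _ ≤ ε / 2 * 2 := mul_le_mul_of_nonneg_left hladder (half_pos hε).le
    _ = ε := by ring

theorem stmt_13 (X Y : Type*) [MetricSpace X] [MetricSpace Y] (f : X → Y)
    (φ Φ : ℝ → ℝ)
    (hφ0 : ∀ r, 0 ≤ r → 0 ≤ φ r) (hφmono : MonotoneOn φ (Set.Ici (0 : ℝ)))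
    (hφunb : ∀ M : ℝ, ∃ r, 0 ≤ r ∧ M ≤ φ r)
    (hΦ0 : ∀ r, 0 ≤ r → 0 ≤ Φ r) (hΦmono : MonotoneOn Φ (Set.Ici (0 : ℝ)))
    (hΦunb : ∀ M : ℝ, ∃ r, 0 ≤ r ∧ M ≤ Φ r)
    (hcoarse : ∀ x x' : X,
      φ (dist x x') ≤ dist (f x) (f x') ∧ dist (f x) (f x') ≤ Φ (dist x x')) :
    ∀ ε > (0 : ℝ), ∃ cX cY : ℝ → ℝ,
      (∀ r, 0 ≤ r → 0 ≤ cX r) ∧ ConcaveOn ℝ (Set.Ici (0 : ℝ)) cX ∧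
        StrictMonoOn cX (Set.Ici (0 : ℝ)) ∧ ContinuousOn cX (Set.Ici (0 : ℝ)) ∧
        (∀ M : ℝ, ∃ r, 0 ≤ r ∧ M ≤ cX r) ∧
        (∀ r, 0 ≤ r → (cX r = 0 ↔ r = 0)) ∧
      (∀ r, 0 ≤ r → 0 ≤ cY r) ∧ ConcaveOn ℝ (Set.Ici (0 : ℝ)) cY ∧
        StrictMonoOn cY (Set.Ici (0 : ℝ)) ∧ ContinuousOn cY (Set.Ici (0 : ℝ)) ∧
        (∀ M : ℝ, ∃ r, 0 ≤ r ∧ M ≤ cY r) ∧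
        (∀ r, 0 ≤ r → (cY r = 0 ↔ r = 0)) ∧
      IsMetric (fun x x' : X => cX (dist x x')) ∧
      IsMetric (fun y y' : Y => cY (dist y y')) ∧
      (∀ x x' : X, |cY (dist (f x) (f x')) - cX (dist x x')| ≤ ε) :=
  stmt_13_general X Y f φ Φ hφmono hφunb hΦmono hcoarse
end
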